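/- arXiv:1610.09466 — 13 statements merged into one kernel-verified Lean document; each statement's English description precedes it below -/
import Mathlib

section
/- Let p ≥ 5 be a prime with p ≡ 2 (mod 3). Let θ ∈ ℚ_p and q ∈ ℕ satisfy |θ−1|_p < 1, |(q:ℚ_p)|_p < 1 and (θ−1)(1−θ−q) ≠ 0. Then the cubic equation y³ − (1+θ+θ²)y² − (2θ+1)(1−θ−q)y − (1−θ−q)² = 0 has exactly one root y⁽¹⁾ in ℚ_p, and this root satisfies |y⁽¹⁾|_p = 1. -/
/-!
With `s = 1 - θ - q`, the cubic reads `y³ = Q(y, s)` where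
`Q(y, s) = (1 + θ + θ²) y² + (2θ + 1) s y + s²` is a binary quadratic form of discriminant `-3`:
`4 Q = ((2θ + 1) y + 2 s)² + 3 y²`. For `p ≡ 2 (mod 3)` the number `-3` is not a square mod `p`,
so `‖a² + 3 b²‖ ≥ ‖b‖²` in `ℚ_p`, whence every nonzero root has `‖y‖² ≤ ‖y‖³`, i.e. `‖y‖ ≥ 1`;
integrality of the coefficients gives `‖y‖ ≤ 1`. Modulo `p` the cubic is `y² (y - 3)`, so the unit
roots are exactly the lifts of the simple root `3`, and Hensel's lemma provides exactly one.
-/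

open Polynomial

noncomputable def pottsCubic {R : Type*} [CommRing R] (θ s : R) : R[X] :=
  X ^ 3 - C (1 + θ + θ ^ 2) * X ^ 2 - C ((2 * θ + 1) * s) * X - C (s ^ 2)

section PottsCubic

variable {R : Type*} [CommRing R]

@[simp]
theorem eval_pottsCubic (θ s y : R) :
    (pottsCubic θ s).eval y = y ^ 3 - (1 + θ + θ ^ 2) * y ^ 2 - (2 * θ + 1) * s * y - s ^ 2 := by
  simp [pottsCubic]

theorem monic_pottsCubic [Nontrivial R] (θ s : R) : (pottsCubic θ s).Monic := by
  unfold pottsCubic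
  monicity!

theorem map_pottsCubic {S : Type*} [CommRing S] (f : R →+* S) (θ s : R) :
    (pottsCubic θ s).map f = pottsCubic (f θ) (f s) := by
  simp [pottsCubic, map_ofNat]

end PottsCubic

theorem norm_le_one_of_norm_sub_one_le_one {R : Type*} [SeminormedRing R] [NormOneClass R]
    [IsUltrametricDist R] {x : R} (h : ‖x - 1‖ ≤ 1) : ‖x‖ ≤ 1 := by
  simpa using (IsUltrametricDist.norm_add_one_le_max_norm_one (x - 1)).trans (max_le h le_rfl)

theorem ZMod.sq_add_three_ne_zero {p : ℕ} [Fact p.Prime] (hp2 : p ≠ 2) (hp3 : p % 3 = 2)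
    (x : ZMod p) : x ^ 2 + 3 ≠ 0 := by
  intro hx
  have h2 : (2 : ZMod p) ≠ 0 := by exact_mod_cast prime_ne_zero p 2 hp2
  have h3 : (3 : ZMod p) ≠ 0 := by exact_mod_cast prime_ne_zero p 3 (by omega)
  -- `x = 2ω + 1` for a primitive cube root of unity `ω`, whose order `3` would divide `p - 1`
  set ω : ZMod p := (x - 1) / 2
  have hω : ω ^ 2 + ω + 1 = 0 := by
    simp only [ω]
    field_simp
    linear_combination hx
  have hω1 : ω ≠ 1 := by
    rintro h
    rw [h] at hω
    exact h3 (by linear_combination hω)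
  have hω0 : ω ≠ 0 := by
    rintro h
    simp [h] at hω
  have hord : orderOf ω = 3 := orderOf_eq_prime (by linear_combination (ω - 1) * hω) hω1
  have hdvd := orderOf_dvd_card_sub_one hω0
  rw [hord] at hdvd
  omega

namespace PadicInt

variable {p : ℕ} [Fact p.Prime]

theorem norm_lt_one_iff_toZMod_eq_zero {z : ℤ_[p]} : ‖z‖ < 1 ↔ toZMod z = 0 := by
  rw [← mem_nonunits, ← IsLocalRing.mem_maximalIdeal, ← ker_toZMod, RingHom.mem_ker]

theorem norm_eq_one_iff_toZMod_ne_zero {z : ℤ_[p]} : ‖z‖ = 1 ↔ toZMod z ≠ 0 := by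
  rw [Ne, ← norm_lt_one_iff_toZMod_eq_zero, not_lt, (norm_le_one z).ge_iff_eq]

theorem existsUnique_eval_eq_zero_toZMod_eq {F : ℤ_[p][X]} {a : ℤ_[p]}
    (ha : toZMod (F.eval a) = 0) (ha' : toZMod (F.derivative.eval a) ≠ 0) :
    ∃! z : ℤ_[p], F.eval z = 0 ∧ toZMod z = toZMod a := by
  have hder : ‖F.derivative.eval a‖ = 1 := norm_eq_one_iff_toZMod_ne_zero.2 ha'
  have hclose (z : ℤ_[p]) : ‖z - a‖ < 1 ↔ toZMod z = toZMod a := by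
    rw [norm_lt_one_iff_toZMod_eq_zero, map_sub, sub_eq_zero]
  have hnorm : ‖F.aeval a‖ < ‖F.derivative.aeval a‖ ^ 2 := by
    rw [coe_aeval_eq_eval, hder, one_pow]
    exact norm_lt_one_iff_toZMod_eq_zero.2 ha
  obtain ⟨z, hz, hza, -, huniq⟩ := hensels_lemma hnorm
  simp only [coe_aeval_eq_eval, hder, hclose] at hz hza huniq
  exact ⟨z, ⟨hz, hza⟩, fun z' ⟨hz', hz'a⟩ => huniq z' hz' hz'a⟩

theorem existsUnique_pottsCubic_root_norm_eq_one (hp3 : p ≠ 3) {Θ S : ℤ_[p]}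
    (hΘ : toZMod Θ = 1) (hS : toZMod S = 0) :
    ∃! z : ℤ_[p], (pottsCubic Θ S).eval z = 0 ∧ ‖z‖ = 1 := by
  have h3 : (3 : ZMod p) ≠ 0 := by exact_mod_cast ZMod.prime_ne_zero p 3 hp3
  have hres (z : ℤ_[p]) :
      toZMod ((pottsCubic Θ S).eval z) = toZMod z ^ 2 * (toZMod z - 3) := by
    rw [← eval_map_apply, map_pottsCubic, hΘ, hS, eval_pottsCubic]
    ring
  have hder : toZMod ((pottsCubic Θ S).derivative.eval 3) = 3 ^ 2 := by
    rw [← eval_map_apply, ← derivative_map, map_pottsCubic, hΘ, hS, map_ofNat]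
    simp [pottsCubic]
    norm_num
  have hlift := existsUnique_eval_eq_zero_toZMod_eq (F := pottsCubic Θ S) (a := 3)
    (by rw [hres, map_ofNat]; ring) (by rw [hder]; exact pow_ne_zero 2 h3)
  rw [map_ofNat] at hlift
  refine (existsUnique_congr fun w => and_congr_right fun hw => ?_).1 hlift
  have hw3 := hres w
  rw [hw, map_zero, eq_comm, mul_eq_zero, sub_eq_zero] at hw3
  rw [norm_eq_one_iff_toZMod_ne_zero]
  exact ⟨fun h => h ▸ h3, fun h => hw3.resolve_left (pow_ne_zero 2 h)⟩

end PadicInt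

namespace Padic

variable {p : ℕ} [Fact p.Prime]

theorem norm_le_one_of_aeval_eq_zero {F : ℤ_[p][X]} (hF : F.Monic) {y : ℚ_[p]}
    (hy : F.aeval y = 0) : ‖y‖ ≤ 1 := by
  obtain ⟨z, rfl⟩ := IsIntegrallyClosed.isIntegral_iff.1 ⟨F, hF, hy⟩
  exact z.norm_le_one

theorem one_le_norm_sq_add_three (hp2 : p ≠ 2) (hp3 : p % 3 = 2) (c : ℚ_[p]) :
    1 ≤ ‖c ^ 2 + 3‖ := by
  have h3 : ‖(3 : ℚ_[p])‖ ≤ 1 := by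
    exact_mod_cast IsUltrametricDist.norm_natCast_le_one ℚ_[p] 3
  rcases le_or_gt ‖c‖ 1 with hc | hc
  · let C : ℤ_[p] := ⟨c, hc⟩
    have hC : ‖C ^ 2 + 3‖ = 1 := PadicInt.norm_eq_one_iff_toZMod_ne_zero.2 <| by
      simpa [map_ofNat] using ZMod.sq_add_three_ne_zero hp2 hp3 (PadicInt.toZMod C)
    exact hC.ge
  · have hc2 : 1 < ‖c ^ 2‖ := by
      rw [norm_pow]
      exact one_lt_pow₀ hc two_ne_zero
    rw [IsUltrametricDist.norm_add_eq_max_of_norm_ne_norm (h3.trans_lt hc2).ne',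
      max_eq_left (h3.trans hc2.le)]
    exact hc2.le

theorem norm_sq_le_norm_sq_add_three_mul_sq (hp2 : p ≠ 2) (hp3 : p % 3 = 2) (a b : ℚ_[p]) :
    ‖b‖ ^ 2 ≤ ‖a ^ 2 + 3 * b ^ 2‖ := by
  rcases eq_or_ne b 0 with rfl | hb
  · simp
  have hfactor : a ^ 2 + 3 * b ^ 2 = b ^ 2 * ((a / b) ^ 2 + 3) := by
    field_simp
  rw [hfactor, norm_mul, norm_pow]
  exact le_mul_of_one_le_right (by positivity) (one_le_norm_sq_add_three hp2 hp3 _)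

theorem one_le_norm_of_pottsCubic_root (hp2 : p ≠ 2) (hp3 : p % 3 = 2) {θ s y : ℚ_[p]}
    (hy : (pottsCubic θ s).eval y = 0) (hy0 : y ≠ 0) : 1 ≤ ‖y‖ := by
  have hform : ((2 * θ + 1) * y + 2 * s) ^ 2 + 3 * y ^ 2 = 4 * y ^ 3 := by
    rw [eval_pottsCubic] at hy
    linear_combination -4 * hy
  have h := norm_sq_le_norm_sq_add_three_mul_sq hp2 hp3 ((2 * θ + 1) * y + 2 * s) y
  rw [hform, norm_mul, norm_pow] at h
  have h4 : ‖(4 : ℚ_[p])‖ ≤ 1 := by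
    exact_mod_cast IsUltrametricDist.norm_natCast_le_one ℚ_[p] 4
  have hy : 0 < ‖y‖ := norm_pos_iff.2 hy0
  have hcube : ‖y‖ ^ 2 * 1 ≤ ‖y‖ ^ 2 * ‖y‖ := by
    nlinarith [mul_le_mul_of_nonneg_right h4 (by positivity : (0 : ℝ) ≤ ‖y‖ ^ 3)]
  exact le_of_mul_le_mul_left hcube (by positivity)

theorem norm_le_one_of_pottsCubic_root {θ s y : ℚ_[p]} (hθ : ‖θ‖ ≤ 1) (hs : ‖s‖ ≤ 1)
    (hy : (pottsCubic θ s).eval y = 0) : ‖y‖ ≤ 1 := by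
  let Θ : ℤ_[p] := ⟨θ, hθ⟩
  let S : ℤ_[p] := ⟨s, hs⟩
  refine norm_le_one_of_aeval_eq_zero (monic_pottsCubic Θ S) ?_
  rw [← eval_map_algebraMap, map_pottsCubic]
  exact hy

theorem norm_eq_one_of_pottsCubic_root (hp2 : p ≠ 2) (hp3 : p % 3 = 2) {θ s y : ℚ_[p]}
    (hθ : ‖θ‖ ≤ 1) (hs : ‖s‖ ≤ 1) (hs0 : s ≠ 0) (hy : (pottsCubic θ s).eval y = 0) :
    ‖y‖ = 1 := by
  refine le_antisymm (norm_le_one_of_pottsCubic_root hθ hs hy)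
    (one_le_norm_of_pottsCubic_root hp2 hp3 hy ?_)
  rintro rfl
  simp [hs0] at hy

theorem existsUnique_pottsCubic_root (hp2 : p ≠ 2) (hp3 : p % 3 = 2) {θ s : ℚ_[p]}
    (hθ : ‖θ - 1‖ < 1) (hs : ‖s‖ < 1) (hs0 : s ≠ 0) :
    ∃! y : ℚ_[p], (pottsCubic θ s).eval y = 0 := by
  have hθ1 := norm_le_one_of_norm_sub_one_le_one hθ.le
  have hroot (y : ℚ_[p]) (hy : (pottsCubic θ s).eval y = 0) : ‖y‖ = 1 :=
    norm_eq_one_of_pottsCubic_root hp2 hp3 hθ1 hs.le hs0 hy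
  obtain ⟨Θ, rfl⟩ : ∃ Θ : ℤ_[p], (Θ : ℚ_[p]) = θ := ⟨⟨θ, hθ1⟩, rfl⟩
  obtain ⟨S, rfl⟩ : ∃ S : ℤ_[p], (S : ℚ_[p]) = s := ⟨⟨s, hs.le⟩, rfl⟩
  have hcoe (z : ℤ_[p]) :
      (pottsCubic (Θ : ℚ_[p]) S).eval (z : ℚ_[p]) = ↑((pottsCubic Θ S).eval z) := by
    have := eval_map_apply (p := pottsCubic Θ S) PadicInt.Coe.ringHom z
    rwa [map_pottsCubic] at this
  have hΘ : PadicInt.toZMod Θ = 1 := by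
    rw [← sub_eq_zero, ← map_one PadicInt.toZMod, ← map_sub,
      ← PadicInt.norm_lt_one_iff_toZMod_eq_zero]
    exact hθ
  obtain ⟨z, ⟨hz, -⟩, huniq⟩ := PadicInt.existsUnique_pottsCubic_root_norm_eq_one (by omega) hΘ
    (PadicInt.norm_lt_one_iff_toZMod_eq_zero.1 hs)
  refine ⟨z, (hcoe z).trans (by rw [hz, PadicInt.coe_zero]), fun y hy => ?_⟩
  have hy1 := hroot y hy
  exact congrArg ((↑) : ℤ_[p] → ℚ_[p])
    (huniq ⟨y, hy1.le⟩ ⟨PadicInt.coe_eq_zero.1 ((hcoe _).symm.trans hy), hy1⟩)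

end Padic

/-- For a prime `p ≥ 5` with `p ≡ 2 (mod 3)`, `θ ∈ ℚ_p` and `q ∈ ℕ` with
`‖θ-1‖ < 1`, `‖q‖ < 1` and `(θ-1)(1-θ-q) ≠ 0`, the cubic
`y³ - (1+θ+θ²)y² - (2θ+1)(1-θ-q)y - (1-θ-q)² = 0` has exactly one root in `ℚ_p`,
and this root has norm `1`. -/
theorem potts_bethe_cubic_unique_root (p : ℕ) [Fact (Nat.Prime p)]
    (hp5 : 5 ≤ p) (hp3 : p % 3 = 2) (θ : ℚ_[p]) (q : ℕ)
    (hθ : ‖θ - 1‖ < 1) (hq : ‖(q : ℚ_[p])‖ < 1)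
    (hne : (θ - 1) * (1 - θ - (q : ℚ_[p])) ≠ 0) :
    (∃! y : ℚ_[p],
      y ^ 3 - (1 + θ + θ ^ 2) * y ^ 2 - (2 * θ + 1) * (1 - θ - (q : ℚ_[p])) * y
        - (1 - θ - (q : ℚ_[p])) ^ 2 = 0) ∧
    ∀ y : ℚ_[p],
      y ^ 3 - (1 + θ + θ ^ 2) * y ^ 2 - (2 * θ + 1) * (1 - θ - (q : ℚ_[p])) * y
        - (1 - θ - (q : ℚ_[p])) ^ 2 = 0 → ‖y‖ = 1 := by
  have hp2 : p ≠ 2 := by omega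
  have hs : ‖1 - θ - (q : ℚ_[p])‖ < 1 := by
    rw [show 1 - θ - (q : ℚ_[p]) = -((θ - 1) + q) by ring, norm_neg]
    exact (IsUltrametricDist.norm_add_le_max _ _).trans_lt (max_lt hθ hq)
  have hs0 := right_ne_zero_of_mul hne
  simp only [← eval_pottsCubic]
  exact ⟨Padic.existsUnique_pottsCubic_root hp2 hp3 hθ hs hs0, fun _ =>
    Padic.norm_eq_one_of_pottsCubic_root hp2 hp3 (norm_le_one_of_norm_sub_one_le_one hθ.le)
      hs.le hs0⟩
end

section
/- Let p ≥ 5 be a prime with p ≡ 2 (mod 3). Let θ ∈ ℚ_p and q ∈ ℕ satisfy |θ−1|_p < 1, |(q:ℚ_p)|_p < 1 and (θ−1)(1−θ−q) ≠ 0. Then the cubic equation y³ − (1+θ+θ²)y² − (2θ+1)(1−θ−q)y − (1−θ−q)² = 0 has no root y ∈ ℚ_p with |y|_p < 1. -/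
/-! Put `b = 1 - θ - q`. Since `θ ≡ 1` and `y ≡ 0` modulo `p`, the cubic can be rewritten as
`3y² + 3yb + b² = y³ - (θ - 1)((θ + 2)y² + 2yb)`, whose right-hand side has norm
`< max(‖y‖, ‖b‖)²`. But the binary form `3u² + 3uv + v²` has discriminant `-3`, a non-square
modulo `p`, so it is anisotropic over `𝔽_p`; rescaling to primitive `p`-adic integers gives
`‖3y² + 3yb + b²‖ = max(‖y‖, ‖b‖)²`, a contradiction since `b ≠ 0`. -/

theorem ZMod.not_isSquare_neg_three {p : ℕ} [Fact p.Prime] (hp2 : p ≠ 2) (hp3 : p % 3 = 2) :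
    ¬IsSquare (-3 : ZMod p) := by
  rintro ⟨s, hs⟩
  have cast_ne_zero : ∀ ℓ : ℕ, ℓ.Prime → ℓ ≠ p → (ℓ : ZMod p) ≠ 0 := fun ℓ hℓ hℓp h =>
    hℓp ((Nat.prime_dvd_prime_iff_eq Fact.out hℓ).1 ((ZMod.natCast_eq_zero_iff ℓ p).1 h)).symm
  have h2 : (2 : ZMod p) ≠ 0 := by exact_mod_cast cast_ne_zero 2 Nat.prime_two hp2.symm
  have h3 : (3 : ZMod p) ≠ 0 := by exact_mod_cast cast_ne_zero 3 Nat.prime_three (by omega)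
  -- `ω = (s - 1) / 2` is a primitive cube root of unity, so `3 ∣ p - 1`.
  obtain ⟨ω, hω⟩ : ∃ ω : ZMod p, 2 * ω = s - 1 := ⟨(s - 1) / 2, by field_simp⟩
  have hω3 : ω ^ 2 + ω + 1 = 0 := by
    refine (mul_eq_zero.1 ?_).resolve_left (mul_ne_zero h2 h2)
    linear_combination (2 * ω + s + 1) * hω - hs
  have hω1 : ω ≠ 1 := by
    rintro rfl
    exact h3 (by linear_combination hω3)
  have hω0 : ω ≠ 0 := by
    rintro rfl
    simp at hω3
  have hord : orderOf ω = 3 := orderOf_eq_prime (by linear_combination (ω - 1) * hω3) hω1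
  have := hord ▸ ZMod.orderOf_dvd_card_sub_one hω0
  omega

theorem eq_zero_of_three_mul_sq_add_three_mul_add_sq_eq_zero {K : Type*} [Field K]
    (h : ¬IsSquare (-3 : K)) {u v : K} (huv : 3 * u ^ 2 + 3 * u * v + v ^ 2 = 0) :
    u = 0 ∧ v = 0 := by
  have hu : u = 0 := by
    by_contra hu
    -- `(2v + 3u)² + 3u² = 4 (3u² + 3uv + v²)`
    exact h ⟨(2 * v + 3 * u) / u, by field_simp; linear_combination -4 * huv⟩
  subst hu
  simpa using huv

section Ultrametric

variable {K : Type*} [NormedField K] [IsUltrametricDist K]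

open IsUltrametricDist

theorem IsUltrametricDist.norm_mul_sq_add_mul_mul_le {a c : K} (ha : ‖a‖ ≤ 1) (hc : ‖c‖ ≤ 1)
    (x y : K) : ‖a * x ^ 2 + c * x * y‖ ≤ max ‖x‖ ‖y‖ ^ 2 := by
  have hx := le_max_left ‖x‖ ‖y‖
  have hy := le_max_right ‖x‖ ‖y‖
  refine (norm_add_le_max _ _).trans (max_le ?_ ?_)
  · rw [norm_mul, norm_pow]
    exact (mul_le_of_le_one_left (by positivity) ha).trans (by gcongr)
  · rw [norm_mul, norm_mul, mul_assoc, sq]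
    exact (mul_le_of_le_one_left (by positivity) hc).trans (by gcongr)

theorem IsUltrametricDist.norm_cube_sub_mul_lt {y ε z : K} {m : ℝ} (hm : 0 < m) (hy : ‖y‖ < 1)
    (hym : ‖y‖ ≤ m) (hε : ‖ε‖ < 1) (hz : ‖z‖ ≤ m ^ 2) : ‖y ^ 3 - ε * z‖ < m ^ 2 := by
  rw [sub_eq_add_neg]
  refine (norm_add_le_max _ _).trans_lt (max_lt ?_ ?_)
  · calc ‖y ^ 3‖ = ‖y‖ * ‖y‖ ^ 2 := by rw [norm_pow]; ring
      _ ≤ ‖y‖ * m ^ 2 := by gcongr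
      _ < m ^ 2 := mul_lt_of_lt_one_left (by positivity) hy
  · calc ‖-(ε * z)‖ = ‖ε‖ * ‖z‖ := by rw [norm_neg, norm_mul]
      _ ≤ ‖ε‖ * m ^ 2 := by gcongr
      _ < m ^ 2 := mul_lt_of_lt_one_left (by positivity) hε

end Ultrametric

theorem PadicInt.norm_three_mul_sq_add_three_mul_add_sq {p : ℕ} [Fact p.Prime]
    (h : ¬IsSquare (-3 : ZMod p)) {u v : ℤ_[p]} (huv : ‖u‖ = 1 ∨ ‖v‖ = 1) :
    ‖3 * u ^ 2 + 3 * u * v + v ^ 2‖ = 1 := by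
  have norm_lt_one_iff : ∀ x : ℤ_[p], ‖x‖ < 1 ↔ toZMod x = 0 := fun x => by
    rw [← RingHom.mem_ker, ker_toZMod, IsLocalRing.mem_maximalIdeal, mem_nonunits]
  refine (norm_le_one _).antisymm (not_lt.1 fun hlt => ?_)
  rw [norm_lt_one_iff] at hlt
  simp only [map_add, map_mul, map_pow, map_ofNat] at hlt
  have := eq_zero_of_three_mul_sq_add_three_mul_add_sq_eq_zero h hlt
  rw [← norm_lt_one_iff, ← norm_lt_one_iff] at this
  rcases huv with hu | hv
  · exact this.1.ne hu
  · exact this.2.ne hv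

theorem Padic.norm_three_mul_sq_add_three_mul_add_sq {p : ℕ} [Fact p.Prime]
    (h : ¬IsSquare (-3 : ZMod p)) (x y : ℚ_[p]) :
    ‖3 * x ^ 2 + 3 * x * y + y ^ 2‖ = max ‖x‖ ‖y‖ ^ 2 := by
  obtain ⟨s, hs_mem, hs⟩ : ∃ s, (s = x ∨ s = y) ∧ ‖s‖ = max ‖x‖ ‖y‖ :=
    (max_choice ‖x‖ ‖y‖).elim (fun h => ⟨x, .inl rfl, h.symm⟩) (fun h => ⟨y, .inr rfl, h.symm⟩)
  rcases eq_or_ne s 0 with rfl | hs0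
  · rw [norm_zero] at hs
    have hx : ‖x‖ ≤ 0 := hs ▸ le_max_left _ _
    have hy : ‖y‖ ≤ 0 := hs ▸ le_max_right _ _
    simp [norm_le_zero_iff.1 hx, norm_le_zero_iff.1 hy]
  -- Rescale by `s` to a pair of `p`-adic integers one of which is a unit.
  have hu : ‖x / s‖ ≤ 1 := by
    rw [norm_div]; exact div_le_one_of_le₀ (hs ▸ le_max_left _ _) (norm_nonneg _)
  have hv : ‖y / s‖ ≤ 1 := by
    rw [norm_div]; exact div_le_one_of_le₀ (hs ▸ le_max_right _ _) (norm_nonneg _)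
  have huv : ‖x / s‖ = 1 ∨ ‖y / s‖ = 1 := by
    rcases hs_mem with rfl | rfl <;> simp [hs0]
  have key := PadicInt.norm_three_mul_sq_add_three_mul_add_sq h
    (u := ⟨x / s, hu⟩) (v := ⟨y / s, hv⟩) huv
  change ‖3 * (x / s) ^ 2 + 3 * (x / s) * (y / s) + (y / s) ^ 2‖ = 1 at key
  calc ‖3 * x ^ 2 + 3 * x * y + y ^ 2‖
      = ‖s‖ ^ 2 * ‖3 * (x / s) ^ 2 + 3 * (x / s) * (y / s) + (y / s) ^ 2‖ := by
        rw [← norm_pow, ← norm_mul]; congr 1; field_simp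
    _ = max ‖x‖ ‖y‖ ^ 2 := by rw [key, mul_one, hs]

theorem potts_bethe_cubic_no_small_root_general (p : ℕ) [Fact (Nat.Prime p)]
    (hp5 : 5 ≤ p) (hp3 : p % 3 = 2) (θ : ℚ_[p]) (q : ℕ)
    (hθ : ‖θ - 1‖ < 1)
    (hne : (θ - 1) * (1 - θ - (q : ℚ_[p])) ≠ 0) :
    ¬ ∃ y : ℚ_[p],
      y ^ 3 - (1 + θ + θ ^ 2) * y ^ 2 - (2 * θ + 1) * (1 - θ - (q : ℚ_[p])) * y
        - (1 - θ - (q : ℚ_[p])) ^ 2 = 0 ∧ ‖y‖ < 1 := by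
  rintro ⟨y, hroot, hy⟩
  set b := 1 - θ - (q : ℚ_[p])
  have hm : 0 < max ‖y‖ ‖b‖ := lt_max_of_lt_right (norm_pos_iff.2 (right_ne_zero_of_mul hne))
  have hθ2 : ‖θ + 2‖ ≤ 1 := by
    rw [show θ + 2 = θ - 1 + (3 : ℕ) by push_cast; ring]
    exact (IsUltrametricDist.norm_add_le_max _ _).trans
      (max_le hθ.le (IsUltrametricDist.norm_natCast_le_one _ _))
  have hform :
      3 * y ^ 2 + 3 * y * b + b ^ 2 = y ^ 3 - (θ - 1) * ((θ + 2) * y ^ 2 + 2 * y * b) := by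
    linear_combination -hroot
  have hnorm := Padic.norm_three_mul_sq_add_three_mul_add_sq
    (ZMod.not_isSquare_neg_three (by omega) hp3) y b
  rw [hform] at hnorm
  have h2 : ‖(2 : ℚ_[p])‖ ≤ 1 := by
    simpa using IsUltrametricDist.norm_natCast_le_one ℚ_[p] 2
  exact (IsUltrametricDist.norm_cube_sub_mul_lt hm hy (le_max_left _ _) hθ
    (IsUltrametricDist.norm_mul_sq_add_mul_mul_le hθ2 h2 y b)).ne hnorm

/-- for `p ≡ 2 (mod 3)` the cubic has no root of norm `< 1`. -/
theorem potts_bethe_cubic_no_small_root (p : ℕ) [Fact (Nat.Prime p)]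
    (hp5 : 5 ≤ p) (hp3 : p % 3 = 2) (θ : ℚ_[p]) (q : ℕ)
    (hθ : ‖θ - 1‖ < 1) (hq : ‖(q : ℚ_[p])‖ < 1)
    (hne : (θ - 1) * (1 - θ - (q : ℚ_[p])) ≠ 0) :
    ¬ ∃ y : ℚ_[p],
      y ^ 3 - (1 + θ + θ ^ 2) * y ^ 2 - (2 * θ + 1) * (1 - θ - (q : ℚ_[p])) * y
        - (1 - θ - (q : ℚ_[p])) ^ 2 = 0 ∧ ‖y‖ < 1 :=
  potts_bethe_cubic_no_small_root_general p hp5 hp3 θ q hθ hne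
end

section
/- Let p ≥ 5 be a prime with p ≡ 2 (mod 3). Let θ ∈ ℚ_p and q ∈ ℕ satisfy |θ−1|_p < |(q:ℚ_p)|_p < 1 and (θ−1)(1−θ−q) ≠ 0. If y⁽¹⁾ ∈ ℚ_p is a root of the cubic y³ − (1+θ+θ²)y² − (2θ+1)(1−θ−q)y − (1−θ−q)² = 0, then |y⁽¹⁾ − 3 + q|_p < |y⁽¹⁾ − 3|_p = |q|_p. -/
/-!
With `e = θ - 1 + q`, the cubic reads `y³ - A y² + B e y - e² = 0` where `A - 3`, `B - 3` and
`e - q` all have norm `< ‖q‖ < 1`. A root with `‖y‖ ≤ ‖e‖` is impossible: `w = y / e` would be a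
`p`-adic integer reducing to a root of `3 w² - 3 w + 1` in `𝔽_p`, which has none when
`p ≡ 2 (mod 3)`. Once `‖y‖ > ‖e‖`, the terms `A y²` and `y³` must cancel to leading order, so
`‖y - 3‖ < 1`, and expanding the cubic at `3` gives `9 (y - 3 + q) = (y - 3) r + t` with
`‖r‖ < 1` and `‖t‖ < ‖q‖`; this forces `‖y - 3‖ = ‖q‖` and `‖y - 3 + q‖ < ‖q‖`.
-/

namespace IsUltrametricDist

section AddGroup

variable {S : Type*} [SeminormedAddGroup S] [IsUltrametricDist S] {x z : S} {r : ℝ}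

lemma norm_add_lt_of_lt (hx : ‖x‖ < r) (hz : ‖z‖ < r) : ‖x + z‖ < r :=
  (norm_add_le_max x z).trans_lt (max_lt hx hz)

lemma norm_sub_le_max (x z : S) : ‖x - z‖ ≤ max ‖x‖ ‖z‖ := by
  simpa only [sub_eq_add_neg, norm_neg] using norm_add_le_max x (-z)

lemma norm_sub_lt_of_lt (hx : ‖x‖ < r) (hz : ‖z‖ < r) : ‖x - z‖ < r :=
  (norm_sub_le_max x z).trans_lt (max_lt hx hz)

lemma norm_eq_of_norm_sub_lt_right (h : ‖x - z‖ < ‖z‖) : ‖x‖ = ‖z‖ := by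
  simpa [max_eq_right h.le] using norm_add_eq_max_of_norm_ne_norm h.ne

end AddGroup

lemma norm_ofNat_le_one {R : Type*} [SeminormedRing R] [NormOneClass R] [IsUltrametricDist R]
    (n : ℕ) [n.AtLeastTwo] : ‖(ofNat(n) : R)‖ ≤ 1 := by
  rw [← Nat.cast_ofNat]
  exact norm_natCast_le_one R _

end IsUltrametricDist

section SeminormedRing

variable {R : Type*} [SeminormedRing R] {k x : R} {r : ℝ}

lemma norm_mul_lt_of_norm_le_one_left (hk : ‖k‖ ≤ 1) (hx : ‖x‖ < r) : ‖k * x‖ < r :=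
  (norm_mul_le k x).trans_lt <| (mul_le_of_le_one_left (norm_nonneg x) hk).trans_lt hx

lemma norm_mul_lt_of_norm_le_one_right (hx : ‖x‖ < r) (hk : ‖k‖ ≤ 1) : ‖x * k‖ < r :=
  (norm_mul_le x k).trans_lt <| (mul_le_of_le_one_right (norm_nonneg x) hk).trans_lt hx

end SeminormedRing

open IsUltrametricDist

section UltrametricField

variable {K : Type*} [NormedField K] [IsUltrametricDist K]

theorem norm_sub_lt_one_of_cubic_eq_zero {A B e y : K} (hB : ‖B‖ ≤ 1) (hey : ‖e‖ < ‖y‖)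
    (hy : y ^ 3 - A * y ^ 2 + B * e * y - e ^ 2 = 0) : ‖y - A‖ < 1 := by
  have hy0 : 0 < ‖y‖ := (norm_nonneg e).trans_lt hey
  have hfactor : y ^ 2 * (y - A) = e * (e - B * y) := by linear_combination hy
  have hrest : ‖e - B * y‖ ≤ ‖y‖ := by
    refine (norm_sub_le_max _ _).trans (max_le hey.le ?_)
    exact (norm_mul_le B y).trans (mul_le_of_le_one_left (norm_nonneg y) hB)
  refine lt_of_mul_lt_mul_left (a := ‖y‖ ^ 2) ?_ (by positivity)
  calc ‖y‖ ^ 2 * ‖y - A‖ = ‖e‖ * ‖e - B * y‖ := by rw [← norm_pow, ← norm_mul, hfactor, norm_mul]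
    _ ≤ ‖e‖ * ‖y‖ := mul_le_mul_of_nonneg_left hrest (norm_nonneg e)
    _ < ‖y‖ ^ 2 * 1 := by nlinarith

theorem norm_add_lt_norm_and_norm_eq_of_mul_add_eq {k u Q r t : K} (hk : ‖k‖ = 1)
    (hr : ‖r‖ < 1) (ht : ‖t‖ < ‖Q‖) (h : k * (u + Q) = u * r + t) :
    ‖u + Q‖ < ‖u‖ ∧ ‖u‖ = ‖Q‖ := by
  have hkr : ‖k - r‖ = 1 := by
    rw [← hk]
    exact norm_eq_of_norm_sub_lt_right (by simpa [hk] using hr)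
  have hu : ‖u‖ = ‖Q‖ := by
    have hsum : ‖(k - r) * u + k * Q‖ < max ‖(k - r) * u‖ ‖k * Q‖ := by
      rw [show (k - r) * u + k * Q = t by linear_combination h]
      exact ht.trans_le (by simp [hk])
    simpa [hk, hkr] using norm_eq_of_add_norm_lt_max hsum
  have hQ : 0 < ‖Q‖ := (norm_nonneg t).trans_lt ht
  refine ⟨?_, hu⟩
  rw [hu, ← one_mul ‖u + Q‖, ← hk, ← norm_mul, h]
  refine norm_add_lt_of_lt ?_ ht
  rw [norm_mul, hu]
  exact mul_lt_of_lt_one_right hQ hr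

end UltrametricField

theorem ZMod.three_mul_sq_sub_three_mul_add_one_ne_zero {p : ℕ} [Fact p.Prime] (hp : p % 3 = 2)
    (v : ZMod p) : 3 * v ^ 2 - 3 * v + 1 ≠ 0 := by
  intro h
  have hv : v ≠ 0 := by rintro rfl; simp at h
  -- `(v - 1) / v` would be a primitive cube root of unity, forcing `3 ∣ p - 1`.
  have hζ3 : ((v - 1) / v) ^ 3 = 1 := by
    field_simp
    linear_combination -h
  have hζ1 : (v - 1) / v ≠ 1 := by
    rw [Ne, div_eq_one_iff_eq hv]
    intro h1
    simpa using congrArg (· - v) h1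
  have hdvd := ZMod.orderOf_dvd_card_sub_one (a := (v - 1) / v) (by rintro h0; simp [h0] at hζ3)
  rw [orderOf_eq_prime hζ3 hζ1] at hdvd
  omega

namespace Padic

variable {p : ℕ} [Fact p.Prime]

theorem norm_three_mul_sq_sub_three_mul_add_one (hp : p % 3 = 2) {w : ℚ_[p]} (hw : ‖w‖ ≤ 1) :
    ‖3 * w ^ 2 - 3 * w + 1‖ = 1 := by
  set W : ℤ_[p] := ⟨w, hw⟩
  have hW : ‖3 * W ^ 2 - 3 * W + 1‖ = ‖3 * w ^ 2 - 3 * w + 1‖ := by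
    rw [PadicInt.norm_def]
    push_cast
    rfl
  refine hW ▸ (PadicInt.norm_le_one _).antisymm (not_lt.1 fun h => ?_)
  have h0 : PadicInt.toZMod (3 * W ^ 2 - 3 * W + 1) = 0 := by
    rwa [← RingHom.mem_ker, PadicInt.ker_toZMod, IsLocalRing.mem_maximalIdeal,
      PadicInt.mem_nonunits]
  exact ZMod.three_mul_sq_sub_three_mul_add_one_ne_zero hp (PadicInt.toZMod W)
    (by simpa [map_ofNat] using h0)

theorem norm_lt_norm_of_cubic_eq_zero (hp : p % 3 = 2) {A B e y : ℚ_[p]} (he0 : e ≠ 0)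
    (he : ‖e‖ < 1) (hA : ‖A - 3‖ < 1) (hB : ‖B - 3‖ < 1)
    (hy : y ^ 3 - A * y ^ 2 + B * e * y - e ^ 2 = 0) : ‖e‖ < ‖y‖ := by
  by_contra! hye
  obtain ⟨w, rfl⟩ : ∃ w, y = e * w := ⟨y / e, (mul_div_cancel₀ y he0).symm⟩
  have hw : ‖w‖ ≤ 1 := by
    rw [norm_mul] at hye
    exact (mul_le_iff_le_one_right (norm_pos_iff.2 he0)).1 hye
  have hcubic : e * w ^ 3 - A * w ^ 2 + B * w - 1 = 0 := by
    refine (mul_eq_zero.1 ?_).resolve_left (pow_ne_zero 2 he0)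
    linear_combination hy
  have hsmall : ‖e * w ^ 3 - (A - 3) * w ^ 2 + (B - 3) * w‖ < 1 := by
    have hwn (n : ℕ) : ‖w ^ n‖ ≤ 1 := by rw [norm_pow]; exact pow_le_one₀ (norm_nonneg _) hw
    refine norm_add_lt_of_lt (norm_sub_lt_of_lt ?_ ?_) ?_
    · exact norm_mul_lt_of_norm_le_one_right he (hwn 3)
    · exact norm_mul_lt_of_norm_le_one_right hA (hwn 2)
    · exact norm_mul_lt_of_norm_le_one_right hB hw
  refine hsmall.ne ?_
  rw [← norm_three_mul_sq_sub_three_mul_add_one hp hw]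
  congr 1
  linear_combination hcubic

theorem norm_sub_three_add_lt_of_cubic_eq_zero (hp : p % 3 = 2) {A B e Q y : ℚ_[p]}
    (hA : ‖A - 3‖ < ‖Q‖) (hB : ‖B - 3‖ < ‖Q‖) (he : ‖e - Q‖ < ‖Q‖) (hQ : ‖Q‖ < 1)
    (hy : y ^ 3 - A * y ^ 2 + B * e * y - e ^ 2 = 0) :
    ‖y - 3 + Q‖ < ‖y - 3‖ ∧ ‖y - 3‖ = ‖Q‖ := by
  have h3 : ‖(3 : ℚ_[p])‖ = 1 := by
    exact_mod_cast norm_natCast_eq_one_iff.2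
      ((Nat.coprime_primes Fact.out Nat.prime_three).2 (by omega))
  have hQ0 : 0 < ‖Q‖ := (norm_nonneg _).trans_lt hA
  have heQ : ‖e‖ = ‖Q‖ := norm_eq_of_norm_sub_lt_right he
  have hA1 : ‖A - 3‖ < 1 := hA.trans hQ
  have hB1 : ‖B - 3‖ < 1 := hB.trans hQ
  have hBle : ‖B‖ ≤ 1 := by
    rw [← sub_add_cancel B 3]
    exact (norm_add_le_max _ _).trans (max_le hB1.le h3.le)
  have hey : ‖e‖ < ‖y‖ :=
    norm_lt_norm_of_cubic_eq_zero hp (norm_pos_iff.1 (heQ ▸ hQ0)) (heQ ▸ hQ) hA1 hB1 hy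
  have hyA : ‖y - A‖ < 1 := norm_sub_lt_one_of_cubic_eq_zero hBle hey hy
  have hy3 : ‖y - 3‖ < 1 := by
    rw [← sub_add_sub_cancel y A 3]
    exact norm_add_lt_of_lt hyA hA1
  refine norm_add_lt_norm_and_norm_eq_of_mul_add_eq (k := 9)
    (r := -((y - 3) * (y - A + 6) - 6 * (A - 3) + B * e))
    (t := 9 * (A - 3) - 3 * ((B - 3) * e) - 9 * (e - Q) + e ^ 2) ?_ ?_ ?_
    (by linear_combination hy)
  · rw [show (9 : ℚ_[p]) = 3 ^ 2 by norm_num, norm_pow, h3, one_pow]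
  · rw [norm_neg]
    refine norm_add_lt_of_lt (norm_sub_lt_of_lt ?_ ?_) ?_
    · exact norm_mul_lt_of_norm_le_one_right hy3
        ((norm_add_le_max _ _).trans (max_le hyA.le (norm_ofNat_le_one 6)))
    · exact norm_mul_lt_of_norm_le_one_left (norm_ofNat_le_one 6) hA1
    · exact norm_mul_lt_of_norm_le_one_left hBle (heQ ▸ hQ)
  · refine norm_add_lt_of_lt (norm_sub_lt_of_lt (norm_sub_lt_of_lt ?_ ?_) ?_) ?_
    · exact norm_mul_lt_of_norm_le_one_left (norm_ofNat_le_one 9) hA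
    · exact norm_mul_lt_of_norm_le_one_left (norm_ofNat_le_one 3)
        (norm_mul_lt_of_norm_le_one_right hB (heQ ▸ hQ.le))
    · exact norm_mul_lt_of_norm_le_one_left (norm_ofNat_le_one 9) he
    · rw [norm_pow, heQ]
      exact pow_lt_self_of_lt_one₀ hQ0 hQ one_lt_two

end Padic

theorem potts_bethe_cubic_root_structure_general (p : ℕ) [Fact (Nat.Prime p)]
    (hp3 : p % 3 = 2) (θ : ℚ_[p]) (q : ℕ)
    (hθq : ‖θ - 1‖ < ‖(q : ℚ_[p])‖) (hq : ‖(q : ℚ_[p])‖ < 1)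
    (y : ℚ_[p])
    (hy : y ^ 3 - (1 + θ + θ ^ 2) * y ^ 2 - (2 * θ + 1) * (1 - θ - (q : ℚ_[p])) * y
        - (1 - θ - (q : ℚ_[p])) ^ 2 = 0) :
    ‖y - 3 + (q : ℚ_[p])‖ < ‖y - 3‖ ∧ ‖y - 3‖ = ‖(q : ℚ_[p])‖ := by
  have hθ2 : ‖θ + 2‖ ≤ 1 := by
    rw [show θ + 2 = θ - 1 + 3 by ring]
    exact (norm_add_le_max _ _).trans (max_le (hθq.trans hq).le (norm_ofNat_le_one 3))
  refine Padic.norm_sub_three_add_lt_of_cubic_eq_zero hp3 (A := 1 + θ + θ ^ 2) (B := 2 * θ + 1)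
    (e := θ - 1 + q) ?_ ?_ (by simpa using hθq) hq (by linear_combination hy)
  · rw [show 1 + θ + θ ^ 2 - 3 = (θ + 2) * (θ - 1) by ring]
    exact norm_mul_lt_of_norm_le_one_left hθ2 hθq
  · rw [show 2 * θ + 1 - 3 = 2 * (θ - 1) by ring]
    exact norm_mul_lt_of_norm_le_one_left (norm_ofNat_le_one 2) hθq

/-- under `‖θ-1‖ < ‖q‖ < 1`, any root `y⁽¹⁾` of the cubic satisfies
`‖y⁽¹⁾ - 3 + q‖ < ‖y⁽¹⁾ - 3‖ = ‖q‖`. -/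
theorem potts_bethe_cubic_root_structure (p : ℕ) [Fact (Nat.Prime p)]
    (hp5 : 5 ≤ p) (hp3 : p % 3 = 2) (θ : ℚ_[p]) (q : ℕ)
    (hθq : ‖θ - 1‖ < ‖(q : ℚ_[p])‖) (hq : ‖(q : ℚ_[p])‖ < 1)
    (hne : (θ - 1) * (1 - θ - (q : ℚ_[p])) ≠ 0)
    (y : ℚ_[p])
    (hy : y ^ 3 - (1 + θ + θ ^ 2) * y ^ 2 - (2 * θ + 1) * (1 - θ - (q : ℚ_[p])) * y
        - (1 - θ - (q : ℚ_[p])) ^ 2 = 0) :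
    ‖y - 3 + (q : ℚ_[p])‖ < ‖y - 3‖ ∧ ‖y - 3‖ = ‖(q : ℚ_[p])‖ :=
  potts_bethe_cubic_root_structure_general p hp3 θ q hθq hq y hy
end

section
/- Let θ ∈ ℚ_p and q ∈ ℕ with θ ≠ 1, and let x ∈ ℚ_p with x ≠ 2−θ−q and x ≠ 1. Then x satisfies ((θx+q−1)/(x+θ+q−2))³ = x if and only if (θ−1)(θx+q−1)((θ+1)x+θ+2q−3) = (x+q−1)(x+θ+q−2)², if and only if y := (x−1+q)/(θ−1) + 1 is a root of the cubic y³ − (1+θ+θ²)y² − (2θ+1)(1−θ−q)y − (1−θ−q)² = 0. -/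
/-- for `θ ≠ 1`, `x ≠ 2-θ-q`, `x ≠ 1`, the fixed point equation
`((θx+q-1)/(x+θ+q-2))³ = x` is equivalent to the cubic equation
`(θ-1)(θx+q-1)((θ+1)x+θ+2q-3) = (x+q-1)(x+θ+q-2)²`, which is in turn equivalent
to `y := (x-1+q)/(θ-1) + 1` being a root of
`y³ - (1+θ+θ²)y² - (2θ+1)(1-θ-q)y - (1-θ-q)² = 0`. -/
theorem potts_bethe_fixed_point_equation_equiv (p : ℕ) [Fact (Nat.Prime p)]
    (θ : ℚ_[p]) (q : ℕ) (hθ : θ ≠ 1) (x : ℚ_[p])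
    (hxinf : x ≠ 2 - θ - (q : ℚ_[p])) (hx1 : x ≠ 1) :
    (((θ * x + (q : ℚ_[p]) - 1) / (x + θ + (q : ℚ_[p]) - 2)) ^ 3 = x ↔
      (θ - 1) * (θ * x + (q : ℚ_[p]) - 1) * ((θ + 1) * x + θ + 2 * (q : ℚ_[p]) - 3)
        = (x + (q : ℚ_[p]) - 1) * (x + θ + (q : ℚ_[p]) - 2) ^ 2) ∧
    (((θ * x + (q : ℚ_[p]) - 1) / (x + θ + (q : ℚ_[p]) - 2)) ^ 3 = x ↔
      ((x - 1 + (q : ℚ_[p])) / (θ - 1) + 1) ^ 3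
        - (1 + θ + θ ^ 2) * ((x - 1 + (q : ℚ_[p])) / (θ - 1) + 1) ^ 2
        - (2 * θ + 1) * (1 - θ - (q : ℚ_[p])) * ((x - 1 + (q : ℚ_[p])) / (θ - 1) + 1)
        - (1 - θ - (q : ℚ_[p])) ^ 2 = 0) := by
  have ht : θ - 1 ≠ 0 := sub_ne_zero.mpr hθ
  have hx1' : x - 1 ≠ 0 := sub_ne_zero.mpr hx1
  have hd : x + θ + (q : ℚ_[p]) - 2 ≠ 0 := by
    intro h; exact hxinf (by linear_combination h)
  have h1 : ((θ * x + (q : ℚ_[p]) - 1) / (x + θ + (q : ℚ_[p]) - 2)) ^ 3 = x ↔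
      (θ - 1) * (θ * x + (q : ℚ_[p]) - 1) * ((θ + 1) * x + θ + 2 * (q : ℚ_[p]) - 3)
        = (x + (q : ℚ_[p]) - 1) * (x + θ + (q : ℚ_[p]) - 2) ^ 2 := by
    rw [div_pow, div_eq_iff (pow_ne_zero 3 hd)]
    constructor
    · intro h
      apply mul_left_cancel₀ hx1'
      linear_combination h
    · intro h
      linear_combination (x - 1) * h
  refine ⟨h1, h1.trans ?_⟩
  have hC : (((x - 1 + (q : ℚ_[p])) / (θ - 1) + 1) ^ 3
        - (1 + θ + θ ^ 2) * ((x - 1 + (q : ℚ_[p])) / (θ - 1) + 1) ^ 2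
        - (2 * θ + 1) * (1 - θ - (q : ℚ_[p])) * ((x - 1 + (q : ℚ_[p])) / (θ - 1) + 1)
        - (1 - θ - (q : ℚ_[p])) ^ 2) * (θ - 1) ^ 3
      = (x + (q : ℚ_[p]) - 1) * (x + θ + (q : ℚ_[p]) - 2) ^ 2
        - (θ - 1) * (θ * x + (q : ℚ_[p]) - 1) * ((θ + 1) * x + θ + 2 * (q : ℚ_[p]) - 3) := by
    field_simp
    ring
  constructor
  · intro h
    have h2 := hC
    rw [show (x + (q : ℚ_[p]) - 1) * (x + θ + (q : ℚ_[p]) - 2) ^ 2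
        - (θ - 1) * (θ * x + (q : ℚ_[p]) - 1) * ((θ + 1) * x + θ + 2 * (q : ℚ_[p]) - 3) = 0
      from by linear_combination -h] at h2
    exact (mul_eq_zero.mp h2).resolve_right (pow_ne_zero 3 ht)
  · intro h
    have h2 : (0 : ℚ_[p]) = (x + (q : ℚ_[p]) - 1) * (x + θ + (q : ℚ_[p]) - 2) ^ 2
        - (θ - 1) * (θ * x + (q : ℚ_[p]) - 1) * ((θ + 1) * x + θ + 2 * (q : ℚ_[p]) - 3) := by
      rw [← hC, h, zero_mul]
    linear_combination h2
end

section
/- Let p ≥ 5 be a prime with p ≡ 2 (mod 3). Let θ ∈ ℚ_p and q ∈ ℕ satisfy |θ−1|_p < |(q:ℚ_p)|_p < 1 and (θ−1)(1−θ−q) ≠ 0, and let f(x) = ((θx+q−1)/(x+θ+q−2))³ be the Potts–Bethe mapping. Then the derivative of f at the fixed point x⁽⁰⁾ = 1 has p-adic norm |f′(1)|_p = |θ−1|_p / |q|_p < 1; that is, x⁽⁰⁾ = 1 is an attracting fixed point. -/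
/-!
At `x = 1` numerator and denominator of the Möbius map both equal `c = θ + q - 1`, so the quotient
rule gives `f'(1) = 3(θ - 1)/c`. Since `‖θ - 1‖ < ‖q‖`, the ultrametric inequality is an equality
for `c = (θ - 1) + q`, giving `‖c‖ = ‖q‖`; and `‖3‖ = 1` because `p ≠ 3`.
-/

def pottsBetheMap {K : Type*} [Field K] (θ q x : K) : K := ((θ * x + q - 1) / (x + θ + q - 2)) ^ 3

section PottsBethe

variable {𝕜 : Type*} [NontriviallyNormedField 𝕜]

theorem hasDerivAt_pottsBetheMap (θ q x : 𝕜) (hx : x + θ + q - 2 ≠ 0) :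
    HasDerivAt (pottsBetheMap θ q)
      (3 * (θ - 1) * (θ - 1 + q) * (θ * x + q - 1) ^ 2 / (x + θ + q - 2) ^ 4) x := by
  have hnum : HasDerivAt (fun x : 𝕜 => θ * x + q - 1) θ x := by
    simpa using (((hasDerivAt_id x).const_mul θ).add_const q).sub_const 1
  have hden : HasDerivAt (fun x : 𝕜 => x + θ + q - 2) 1 x := by
    simpa using ((((hasDerivAt_id x).add_const θ).add_const q).sub_const 2)
  refine ((hnum.fun_div hden hx).fun_pow 3).congr_deriv ?_
  norm_num
  field_simp
  ring

theorem deriv_pottsBetheMap_one (θ q : 𝕜) (hc : θ + q - 1 ≠ 0) :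
    deriv (pottsBetheMap θ q) 1 = 3 * (θ - 1) / (θ + q - 1) := by
  have h1 : (1 : 𝕜) + θ + q - 2 = θ + q - 1 := by ring
  rw [(hasDerivAt_pottsBetheMap θ q 1 (h1 ▸ hc)).deriv, h1]
  field_simp
  ring

end PottsBethe

theorem norm_add_eq_right_of_norm_lt {E : Type*} [SeminormedAddGroup E] [IsUltrametricDist E]
    {x y : E} (h : ‖x‖ < ‖y‖) : ‖x + y‖ = ‖y‖ := by
  rw [IsUltrametricDist.norm_add_eq_max_of_norm_ne_norm h.ne, max_eq_right h.le]

theorem Padic.norm_three_eq_one {p : ℕ} [hp : Fact p.Prime] (hp3 : p ≠ 3) :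
    ‖(3 : ℚ_[p])‖ = 1 := by
  exact_mod_cast Padic.norm_natCast_eq_one_iff.mpr
    ((Nat.coprime_primes hp.out Nat.prime_three).mpr hp3)

theorem potts_bethe_attracting_fixed_point_general (p : ℕ) [Fact (Nat.Prime p)]
    (hp5 : 5 ≤ p) (θ : ℚ_[p]) (q : ℕ)
    (hθq : ‖θ - 1‖ < ‖(q : ℚ_[p])‖) :
    ‖deriv (fun x : ℚ_[p] => ((θ * x + (q : ℚ_[p]) - 1) / (x + θ + (q : ℚ_[p]) - 2)) ^ 3) 1‖
      = ‖θ - 1‖ / ‖(q : ℚ_[p])‖ ∧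
    ‖θ - 1‖ / ‖(q : ℚ_[p])‖ < 1 := by
  have hq : 0 < ‖(q : ℚ_[p])‖ := (norm_nonneg _).trans_lt hθq
  have hc : ‖θ + (q : ℚ_[p]) - 1‖ = ‖(q : ℚ_[p])‖ := by
    rw [show θ + (q : ℚ_[p]) - 1 = θ - 1 + q by ring, norm_add_eq_right_of_norm_lt hθq]
  have hc0 : θ + (q : ℚ_[p]) - 1 ≠ 0 := norm_pos_iff.mp (hc ▸ hq)
  refine ⟨?_, (div_lt_one hq).mpr hθq⟩
  rw [show (fun x : ℚ_[p] => ((θ * x + (q : ℚ_[p]) - 1) / (x + θ + (q : ℚ_[p]) - 2)) ^ 3)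
      = pottsBetheMap θ q from rfl, deriv_pottsBetheMap_one θ _ hc0, norm_div, norm_mul,
    Padic.norm_three_eq_one (by omega), one_mul, hc]

/-- the derivative of the Potts–Bethe mapping at the fixed point
`x⁽⁰⁾ = 1` has norm `‖θ-1‖/‖q‖ < 1`, i.e. `1` is an attracting fixed point. -/
theorem potts_bethe_attracting_fixed_point (p : ℕ) [Fact (Nat.Prime p)]
    (hp5 : 5 ≤ p) (hp3 : p % 3 = 2) (θ : ℚ_[p]) (q : ℕ)
    (hθq : ‖θ - 1‖ < ‖(q : ℚ_[p])‖) (hq : ‖(q : ℚ_[p])‖ < 1)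
    (hne : (θ - 1) * (1 - θ - (q : ℚ_[p])) ≠ 0) :
    ‖deriv (fun x : ℚ_[p] => ((θ * x + (q : ℚ_[p]) - 1) / (x + θ + (q : ℚ_[p]) - 2)) ^ 3) 1‖
      = ‖θ - 1‖ / ‖(q : ℚ_[p])‖ ∧
    ‖θ - 1‖ / ‖(q : ℚ_[p])‖ < 1 :=
  potts_bethe_attracting_fixed_point_general p hp5 θ q hθq
end

section
/- Let p ≥ 5 be a prime with p ≡ 2 (mod 3). Let θ ∈ ℚ_p and q ∈ ℕ satisfy |θ−1|_p < |(q:ℚ_p)|_p < 1 and (θ−1)(1−θ−q) ≠ 0, and let f(x) = ((θx+q−1)/(x+θ+q−2))³ be the Potts–Bethe mapping. Let x⁽¹⁾ = 1 − q + (θ−1)(y⁽¹⁾ − 1), where y⁽¹⁾ is the unique root in ℚ_p of the cubic y³ − (1+θ+θ²)y² − (2θ+1)(1−θ−q)y − (1−θ−q)² = 0. Then |f′(x⁽¹⁾)|_p = |q|_p / |θ−1|_p > 1; that is, x⁽¹⁾ is a repelling fixed point. -/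
/-!
Put `ε = θ - 1` and `s = θ - 1 + q`, so that `‖ε‖ < ‖s‖ = ‖q‖ < 1`. The substitution
`x = 1 - q + ε (y - 1)` turns `f x = x` into `(ε y - s) P(y) = 0`, where `P` is the cubic of the
statement, and turns `f′ x` into `3 s (θ y - s)² / (ε y⁴)`. Modulo `p` the cubic reduces to
`y² (y - 3)`, and `3` is a unit because `p ≠ 3`, so Hensel's lemma lifts the simple root to a
root of norm `1`; by uniqueness this root is `y⁽¹⁾`. In `3 s (θ y⁽¹⁾ - s)² / (ε y⁽¹⁾⁴)` every
factor other than `s` and `ε` is then a unit.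
-/

namespace IsUltrametricDist

variable {S : Type*} [SeminormedAddGroup S] [IsUltrametricDist S]

theorem norm_add_eq_left_of_norm_lt {a b : S} (h : ‖b‖ < ‖a‖) :
    ‖a + b‖ = ‖a‖ := by
  rw [norm_add_eq_max_of_norm_ne_norm h.ne', max_eq_left h.le]

theorem norm_add_lt_of_lt_s8 {a b : S} {r : ℝ} (ha : ‖a‖ < r) (hb : ‖b‖ < r) :
    ‖a + b‖ < r :=
  (norm_add_le_max a b).trans_lt (max_lt ha hb)

theorem norm_eq_one_of_norm_sub_one_lt_one {R : Type*} [SeminormedRing R]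
    [NormOneClass R] [IsUltrametricDist R] {x : R} (h : ‖x - 1‖ < 1) : ‖x‖ = 1 := by
  simpa using norm_add_eq_left_of_norm_lt (a := (1 : R)) (b := x - 1) (by simpa using h)

end IsUltrametricDist

open IsUltrametricDist

def pottsBethe {𝕜 : Type*} [Field 𝕜] (θ q x : 𝕜) : 𝕜 :=
  ((θ * x + q - 1) / (x + θ + q - 2)) ^ 3

section PottsBethe

variable {𝕜 : Type*} [NontriviallyNormedField 𝕜] {θ q : 𝕜}

theorem hasDerivAt_pottsBethe {x : 𝕜} (hx : x + θ + q - 2 ≠ 0) :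
    HasDerivAt (pottsBethe θ q)
      (3 * (θ - 1) * (θ - 1 + q) * (θ * x + q - 1) ^ 2 / (x + θ + q - 2) ^ 4) x := by
  have hnum : HasDerivAt (fun x => θ * x + q - 1) θ x := by
    simpa using (((hasDerivAt_id x).const_mul θ).add_const q).sub_const 1
  have hden : HasDerivAt (fun x => x + θ + q - 2) 1 x := by
    simpa using (((hasDerivAt_id x).add_const θ).add_const q).sub_const 2
  refine ((hnum.fun_div hden hx).pow 3).congr_deriv ?_
  simp only [Nat.cast_ofNat, Nat.add_one_sub_one]
  field_simp
  ring

theorem hasDerivAt_pottsBethe_param {y : 𝕜} (hθ : θ - 1 ≠ 0) (hy : y ≠ 0) :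
    HasDerivAt (pottsBethe θ q)
      (3 * (θ - 1 + q) * (θ * y - (θ - 1 + q)) ^ 2 / ((θ - 1) * y ^ 4))
      (1 - q + (θ - 1) * (y - 1)) := by
  have hden : 1 - q + (θ - 1) * (y - 1) + θ + q - 2 = (θ - 1) * y := by ring
  convert hasDerivAt_pottsBethe (hden ▸ mul_ne_zero hθ hy) using 1
  rw [hden]
  field_simp
  ring

end PottsBethe

variable {p : ℕ} [Fact p.Prime]

theorem Padic.norm_three (hp : p ≠ 3) : ‖(3 : ℚ_[p])‖ = 1 := by
  exact_mod_cast norm_natCast_eq_one_iff.mpr ((Nat.coprime_primes Fact.out Nat.prime_three).mpr hp)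

namespace PadicInt

theorem norm_mul_le_norm_right (x y : ℤ_[p]) : ‖x * y‖ ≤ ‖y‖ := by
  simpa [norm_mul] using mul_le_mul_of_nonneg_right (norm_le_one x) (norm_nonneg y)

open Polynomial in
theorem exists_norm_one_root_cubic {a b c : ℤ_[p]} (ha : ‖a‖ = 1) (hb : ‖b‖ < 1)
    (hc : ‖c‖ < 1) : ∃ z : ℤ_[p], ‖z‖ = 1 ∧ z ^ 3 - a * z ^ 2 - b * z - c = 0 := by
  let F : ℤ_[p][X] := X ^ 3 - Polynomial.C a * X ^ 2 - Polynomial.C b * X - Polynomial.C c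
  have hFa : F.eval a = -(b * a + c) := by
    simp only [F, eval_sub, eval_mul, eval_pow, eval_X, eval_C]
    ring
  have hF'a : F.derivative.eval a = a ^ 2 + -b := by
    simp only [F, derivative_sub, derivative_mul, derivative_X_pow, derivative_C, derivative_X,
      eval_sub, eval_add, eval_mul, eval_pow, eval_X, eval_C, eval_zero, eval_one]
    ring
  have hF'a_norm : ‖F.derivative.eval a‖ = 1 := by
    rw [hF'a, norm_add_eq_left_of_norm_lt] <;> simp [ha, hb]
  have hFa_norm : ‖F.eval a‖ < ‖F.derivative.eval a‖ ^ 2 := by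
    rw [hF'a_norm, one_pow, hFa, norm_neg]
    exact norm_add_lt_of_lt_s8 (by simpa [ha] using hb) hc
  obtain ⟨z, hz, hza, -⟩ := hensels_lemma (F := F) (a := a) (by simpa using hFa_norm)
  refine ⟨z, ?_, by simpa [F] using hz⟩
  rw [← add_sub_cancel a z, norm_add_eq_left_of_norm_lt, ha]
  simpa [ha, hF'a_norm] using hza

theorem exists_norm_one_root_pottsBethe_cubic (hp : p ≠ 3) {θ q : ℤ_[p]}
    (hθq : ‖θ - 1‖ < ‖q‖) (hq : ‖q‖ < 1) :
    ∃ y : ℤ_[p], ‖y‖ = 1 ∧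
      y ^ 3 - (1 + θ + θ ^ 2) * y ^ 2 - (2 * θ + 1) * (1 - θ - q) * y - (1 - θ - q) ^ 2 = 0 := by
  have h3 : ‖(3 : ℤ_[p])‖ = 1 := by
    rw [norm_def]
    exact_mod_cast Padic.norm_three hp
  have hs : ‖1 - θ - q‖ < 1 := by
    rwa [show 1 - θ - q = -(q + (θ - 1)) by ring, norm_neg, norm_add_eq_left_of_norm_lt hθq]
  refine exists_norm_one_root_cubic ?_ ((norm_mul_le_norm_right _ _).trans_lt hs)
    ((pow_two (1 - θ - q) ▸ norm_mul_le_norm_right _ _).trans_lt hs)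
  rw [show 1 + θ + θ ^ 2 = 3 + (θ + 2) * (θ - 1) by ring, norm_add_eq_left_of_norm_lt, h3]
  exact h3 ▸ (norm_mul_le_norm_right _ _).trans_lt (hθq.trans hq)

end PadicInt

theorem Padic.norm_pottsBethe_deriv_param (hp : p ≠ 3) {θ q y : ℚ_[p]} (hθq : ‖θ - 1‖ < ‖q‖)
    (hq : ‖q‖ < 1) (hy : ‖y‖ = 1) :
    ‖3 * (θ - 1 + q) * (θ * y - (θ - 1 + q)) ^ 2 / ((θ - 1) * y ^ 4)‖ = ‖q‖ / ‖θ - 1‖ := by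
  have hθ : ‖θ‖ = 1 := norm_eq_one_of_norm_sub_one_lt_one (hθq.trans hq)
  have hs : ‖θ - 1 + q‖ = ‖q‖ := by rw [add_comm, norm_add_eq_left_of_norm_lt hθq]
  have hys : ‖θ * y - (θ - 1 + q)‖ = 1 := by
    rw [sub_eq_add_neg, norm_add_eq_left_of_norm_lt] <;>
      simp only [norm_neg, hs, norm_mul, hθ, hy, mul_one, hq]
  simp [Padic.norm_three hp, hs, hys, hy]

theorem potts_bethe_repelling_fixed_point_general (p : ℕ) [Fact (Nat.Prime p)]
    (hp5 : 5 ≤ p) (θ : ℚ_[p]) (q : ℕ)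
    (hθq : ‖θ - 1‖ < ‖(q : ℚ_[p])‖) (hq : ‖(q : ℚ_[p])‖ < 1)
    (hne : (θ - 1) * (1 - θ - (q : ℚ_[p])) ≠ 0)
    (y1 : ℚ_[p])
    (hy1u : ∀ z : ℚ_[p],
      z ^ 3 - (1 + θ + θ ^ 2) * z ^ 2 - (2 * θ + 1) * (1 - θ - (q : ℚ_[p])) * z
        - (1 - θ - (q : ℚ_[p])) ^ 2 = 0 → z = y1) :
    ‖deriv (fun x : ℚ_[p] => ((θ * x + (q : ℚ_[p]) - 1) / (x + θ + (q : ℚ_[p]) - 2)) ^ 3)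
        (1 - (q : ℚ_[p]) + (θ - 1) * (y1 - 1))‖
      = ‖(q : ℚ_[p])‖ / ‖θ - 1‖ ∧
    1 < ‖(q : ℚ_[p])‖ / ‖θ - 1‖ := by
  have hp3 : p ≠ 3 := by omega
  have hθ1 : θ - 1 ≠ 0 := left_ne_zero_of_mul hne
  obtain ⟨t, ht⟩ : ∃ t : ℤ_[p], (t : ℚ_[p]) = θ :=
    ⟨⟨θ, (norm_eq_one_of_norm_sub_one_lt_one (hθq.trans hq)).le⟩, rfl⟩
  obtain ⟨y, hy, hroot⟩ := PadicInt.exists_norm_one_root_pottsBethe_cubic hp3 (θ := t) (q := q)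
    (by simpa [PadicInt.norm_def, ht] using hθq) (by simpa [PadicInt.norm_def] using hq)
  have hy1 : ‖y1‖ = 1 := by
    have hroot' := congrArg ((↑) : ℤ_[p] → ℚ_[p]) hroot
    push_cast [ht] at hroot'
    rw [← hy1u y hroot']
    exact hy
  have hy1ne : y1 ≠ 0 := norm_ne_zero_iff.mp (hy1 ▸ one_ne_zero)
  change ‖deriv (pottsBethe θ (q : ℚ_[p])) _‖ = _ ∧ _
  rw [(hasDerivAt_pottsBethe_param hθ1 hy1ne).deriv]
  exact ⟨Padic.norm_pottsBethe_deriv_param hp3 hθq hq hy1,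
    (one_lt_div (norm_pos_iff.mpr hθ1)).mpr hθq⟩

/-- the derivative of the Potts–Bethe mapping at the fixed point
`x⁽¹⁾ = 1 - q + (θ-1)(y⁽¹⁾-1)`, where `y⁽¹⁾` is the unique root of the cubic,
has norm `‖q‖/‖θ-1‖ > 1`, i.e. `x⁽¹⁾` is a repelling fixed point. -/
theorem potts_bethe_repelling_fixed_point (p : ℕ) [Fact (Nat.Prime p)]
    (hp5 : 5 ≤ p) (hp3 : p % 3 = 2) (θ : ℚ_[p]) (q : ℕ)
    (hθq : ‖θ - 1‖ < ‖(q : ℚ_[p])‖) (hq : ‖(q : ℚ_[p])‖ < 1)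
    (hne : (θ - 1) * (1 - θ - (q : ℚ_[p])) ≠ 0)
    (y1 : ℚ_[p])
    (hy1 : y1 ^ 3 - (1 + θ + θ ^ 2) * y1 ^ 2 - (2 * θ + 1) * (1 - θ - (q : ℚ_[p])) * y1
        - (1 - θ - (q : ℚ_[p])) ^ 2 = 0)
    (hy1u : ∀ z : ℚ_[p],
      z ^ 3 - (1 + θ + θ ^ 2) * z ^ 2 - (2 * θ + 1) * (1 - θ - (q : ℚ_[p])) * z
        - (1 - θ - (q : ℚ_[p])) ^ 2 = 0 → z = y1) :
    ‖deriv (fun x : ℚ_[p] => ((θ * x + (q : ℚ_[p]) - 1) / (x + θ + (q : ℚ_[p]) - 2)) ^ 3)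
        (1 - (q : ℚ_[p]) + (θ - 1) * (y1 - 1))‖
      = ‖(q : ℚ_[p])‖ / ‖θ - 1‖ ∧
    1 < ‖(q : ℚ_[p])‖ / ‖θ - 1‖ :=
  potts_bethe_repelling_fixed_point_general p hp5 θ q hθq hq hne y1 hy1u
end

section
/- Let p ≥ 5 be a prime with p ≡ 2 (mod 3). Let θ ∈ ℚ_p and q ∈ ℕ satisfy |θ−1|_p < |(q:ℚ_p)|_p < 1 and (θ−1)(1−θ−q) ≠ 0, and let f(x) = ((θx+q−1)/(x+θ+q−2))³. Then for every x ∈ ℚ_p with |x − 1|_p < |q|_p one has |f(x) − 1|_p ≤ (|θ−1|_p / |q|_p) · |x − 1|_p; in particular f maps the ball 𝒜₀ = {x : |x−1|_p < |q|_p} into itself. -/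
/-- on the ball `𝒜₀ = {x : ‖x-1‖ < ‖q‖}` the Potts–Bethe mapping
satisfies `‖f(x)-1‖ ≤ (‖θ-1‖/‖q‖)·‖x-1‖`; in particular `f(𝒜₀) ⊆ 𝒜₀`. -/
theorem potts_bethe_contracts_on_A0 (p : ℕ) [Fact (Nat.Prime p)]
    (hp5 : 5 ≤ p) (hp3 : p % 3 = 2) (θ : ℚ_[p]) (q : ℕ)
    (hθq : ‖θ - 1‖ < ‖(q : ℚ_[p])‖) (hq : ‖(q : ℚ_[p])‖ < 1)
    (hne : (θ - 1) * (1 - θ - (q : ℚ_[p])) ≠ 0) :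
    ∀ x : ℚ_[p], ‖x - 1‖ < ‖(q : ℚ_[p])‖ →
      ‖((θ * x + (q : ℚ_[p]) - 1) / (x + θ + (q : ℚ_[p]) - 2)) ^ 3 - 1‖
        ≤ ‖θ - 1‖ / ‖(q : ℚ_[p])‖ * ‖x - 1‖ ∧
      ‖((θ * x + (q : ℚ_[p]) - 1) / (x + θ + (q : ℚ_[p]) - 2)) ^ 3 - 1‖
        < ‖(q : ℚ_[p])‖ := by
  intro x hx
  set qp : ℚ_[p] := (q : ℚ_[p]) with hqp
  have hq0 : 0 < ‖qp‖ := lt_of_le_of_lt (norm_nonneg _) hθq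
  -- norm of denominator
  have hsum : ‖(x - 1) + (θ - 1)‖ < ‖qp‖ :=
    lt_of_le_of_lt (Padic.nonarchimedean _ _) (max_lt hx hθq)
  have hD : x + θ + qp - 2 = ((x - 1) + (θ - 1)) + qp := by ring
  have hDnorm : ‖x + θ + qp - 2‖ = ‖qp‖ := by
    rw [hD, Padic.add_eq_max_of_ne (ne_of_lt hsum), max_eq_right (le_of_lt hsum)]
  have hDne : x + θ + qp - 2 ≠ 0 := by
    intro h; rw [h, norm_zero] at hDnorm; exact absurd hDnorm.symm (ne_of_gt hq0)
  set g : ℚ_[p] := (θ * x + qp - 1) / (x + θ + qp - 2) with hg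
  have hg1 : g - 1 = (θ - 1) * (x - 1) / (x + θ + qp - 2) := by
    rw [hg]; field_simp; ring
  have hgnorm : ‖g - 1‖ = ‖θ - 1‖ * ‖x - 1‖ / ‖qp‖ := by
    rw [hg1, norm_div, norm_mul, hDnorm]
  have hxq : ‖x - 1‖ / ‖qp‖ < 1 := (div_lt_one hq0).2 hx
  have hglt : ‖g - 1‖ < ‖qp‖ := by
    rw [hgnorm]
    have h1 : ‖θ - 1‖ * ‖x - 1‖ / ‖qp‖ = ‖θ - 1‖ * (‖x - 1‖ / ‖qp‖) := by ring
    rw [h1]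
    calc ‖θ - 1‖ * (‖x - 1‖ / ‖qp‖) ≤ ‖θ - 1‖ * 1 :=
          mul_le_mul_of_nonneg_left (le_of_lt hxq) (norm_nonneg _)
      _ = ‖θ - 1‖ := mul_one _
      _ < ‖qp‖ := hθq
  have hglt1 : ‖g - 1‖ < 1 := lt_trans hglt hq
  -- norm of 3 is 1
  have h3 : ‖(3 : ℚ_[p])‖ = 1 := by
    have hle : ‖((3 : ℤ) : ℚ_[p])‖ ≤ 1 := Padic.norm_int_le_one 3
    have hnd : ¬ ((p : ℤ) ∣ 3) := by
      intro h
      have := Int.le_of_dvd (by norm_num) h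
      omega
    have hlt : ¬ ‖((3 : ℤ) : ℚ_[p])‖ < 1 := by
      rw [Padic.norm_intCast_lt_one_iff]; exact hnd
    have : ‖((3 : ℤ) : ℚ_[p])‖ = 1 := le_antisymm hle (not_lt.1 hlt)
    simpa using this
  -- norm of g^2+g+1 is 1
  have hsq : g ^ 2 + g + 1 = ((g - 1) ^ 2 + 3 * (g - 1)) + 3 := by ring
  have hsmall : ‖(g - 1) ^ 2 + 3 * (g - 1)‖ < 1 := by
    refine lt_of_le_of_lt (Padic.nonarchimedean _ _) (max_lt ?_ ?_)
    · rw [norm_pow]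
      exact pow_lt_one₀ (norm_nonneg _) hglt1 two_ne_zero
    · rw [norm_mul, h3, one_mul]; exact hglt1
  have hunit : ‖g ^ 2 + g + 1‖ = 1 := by
    rw [hsq, Padic.add_eq_max_of_ne (by rw [h3]; exact ne_of_lt hsmall),
      h3, max_eq_right (le_of_lt hsmall)]
  have hfact : g ^ 3 - 1 = (g - 1) * (g ^ 2 + g + 1) := by ring
  have hfnorm : ‖g ^ 3 - 1‖ = ‖g - 1‖ := by
    rw [hfact, norm_mul, hunit, mul_one]
  constructor
  · rw [hfnorm, hgnorm]
    apply le_of_eq; ring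
  · rw [hfnorm]; exact hglt
end

section
/- Let p ≥ 5 be a prime with p ≡ 2 (mod 3). Let θ ∈ ℚ_p and q ∈ ℕ satisfy |θ−1|_p < |(q:ℚ_p)|_p < 1 and (θ−1)(1−θ−q) ≠ 0, and let f(x) = ((θx+q−1)/(x+θ+q−2))³. Then for every x ∈ ℚ_p with |x − 1|_p > |q|_p one has |f(x) − 1|_p ≤ |θ−1|_p < |q|_p; in particular f maps 𝒜₁ = {x : |x−1|_p > |q|_p} into the ball 𝒜₀ = {x : |x−1|_p < |q|_p}. -/
/-! Write `t = (θx + q - 1)/(x + θ + q - 2)`. The numerator minus the denominator is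
`(θ - 1)(x - 1)`, while the denominator `(x - 1) + (θ - 1 + q)` has norm `‖x - 1‖` because
`‖θ - 1 + q‖ ≤ ‖q‖ < ‖x - 1‖`. Hence `‖t - 1‖ = ‖θ - 1‖ < 1`, so `t` is a unit-ball element and
`t³ - 1 = (t - 1)(t² + t + 1)` with `‖t² + t + 1‖ ≤ 1`. -/

open IsUltrametricDist

section Ultrametric

variable {K : Type*} [NormedField K] [IsUltrametricDist K]

lemma norm_pow_sub_one_le_norm_sub_one {t : K} (ht : ‖t‖ ≤ 1) (n : ℕ) :
    ‖t ^ n - 1‖ ≤ ‖t - 1‖ := by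
  have hgeom : ‖∑ i ∈ Finset.range n, t ^ i‖ ≤ 1 :=
    norm_sum_le_of_forall_le_of_nonneg zero_le_one fun i _ ↦ by
      rw [norm_pow]; exact pow_le_one₀ (norm_nonneg t) ht
  calc ‖t ^ n - 1‖ = ‖∑ i ∈ Finset.range n, t ^ i‖ * ‖t - 1‖ := by
        rw [← norm_mul, geom_sum_mul]
    _ ≤ ‖t - 1‖ := mul_le_of_le_one_left (norm_nonneg _) hgeom

lemma norm_le_one_of_norm_sub_one_le_one_s11 {t : K} (ht : ‖t - 1‖ ≤ 1) : ‖t‖ ≤ 1 := by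
  simpa using norm_add_le_max (t - 1) 1 |>.trans (max_le ht norm_one.le)

lemma norm_potts_ratio_sub_one {θ c x : K} (h : ‖θ - 1 + c‖ < ‖x - 1‖) :
    ‖(θ * x + c - 1) / (x + θ + c - 2) - 1‖ = ‖θ - 1‖ := by
  have hden : ‖x + θ + c - 2‖ = ‖x - 1‖ := by
    rw [show x + θ + c - 2 = (x - 1) + (θ - 1 + c) by ring,
      norm_add_eq_max_of_norm_ne_norm h.ne', max_eq_left h.le]
  have hx : ‖x - 1‖ ≠ 0 := (norm_nonneg _ |>.trans_lt h).ne'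
  have hden0 : x + θ + c - 2 ≠ 0 := norm_ne_zero_iff.mp (hden ▸ hx)
  rw [div_sub_one hden0, show θ * x + c - 1 - (x + θ + c - 2) = (θ - 1) * (x - 1) by ring,
    norm_div, norm_mul, hden, mul_div_cancel_right₀ _ hx]

end Ultrametric

theorem potts_bethe_maps_A1_into_A0_general (p : ℕ) [Fact (Nat.Prime p)]
    (θ : ℚ_[p]) (q : ℕ)
    (hθq : ‖θ - 1‖ < ‖(q : ℚ_[p])‖) (hq : ‖(q : ℚ_[p])‖ < 1) :
    ∀ x : ℚ_[p], ‖(q : ℚ_[p])‖ < ‖x - 1‖ →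
      ‖((θ * x + (q : ℚ_[p]) - 1) / (x + θ + (q : ℚ_[p]) - 2)) ^ 3 - 1‖ ≤ ‖θ - 1‖ ∧
      ‖θ - 1‖ < ‖(q : ℚ_[p])‖ := by
  intro x hx
  have hsmall : ‖θ - 1 + q‖ < ‖x - 1‖ :=
    (norm_add_le_max _ _).trans_lt (max_lt (hθq.trans hx) hx)
  have hratio := norm_potts_ratio_sub_one hsmall
  have hunit := norm_le_one_of_norm_sub_one_le_one_s11 (hratio ▸ (hθq.trans hq).le)
  exact ⟨hratio ▸ norm_pow_sub_one_le_norm_sub_one hunit 3, hθq⟩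

/-- the Potts–Bethe mapping sends `𝒜₁ = {x : ‖x-1‖ > ‖q‖}` into the
ball `𝒜₀ = {x : ‖x-1‖ < ‖q‖}`: indeed `‖f(x)-1‖ ≤ ‖θ-1‖ < ‖q‖` there. -/
theorem potts_bethe_maps_A1_into_A0 (p : ℕ) [Fact (Nat.Prime p)]
    (hp5 : 5 ≤ p) (hp3 : p % 3 = 2) (θ : ℚ_[p]) (q : ℕ)
    (hθq : ‖θ - 1‖ < ‖(q : ℚ_[p])‖) (hq : ‖(q : ℚ_[p])‖ < 1)
    (hne : (θ - 1) * (1 - θ - (q : ℚ_[p])) ≠ 0) :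
    ∀ x : ℚ_[p], ‖(q : ℚ_[p])‖ < ‖x - 1‖ →
      ‖((θ * x + (q : ℚ_[p]) - 1) / (x + θ + (q : ℚ_[p]) - 2)) ^ 3 - 1‖ ≤ ‖θ - 1‖ ∧
      ‖θ - 1‖ < ‖(q : ℚ_[p])‖ :=
  potts_bethe_maps_A1_into_A0_general p θ q hθq hq
end

section
/- Let p ≥ 5 be a prime with p ≡ 2 (mod 3). Let θ ∈ ℚ_p and q ∈ ℕ satisfy |θ−1|_p < |(q:ℚ_p)|_p < 1 and (θ−1)(1−θ−q) ≠ 0, and let f(x) = ((θx+q−1)/(x+θ+q−2))³ with x⁽∞⁾ = 2−θ−q. Then for every x ∈ ℚ_p with |x − x⁽∞⁾|_p = |x − 1|_p = |q|_p one has |f(x) − 1|_p ≤ |θ−1|_p < |q|_p; that is, f maps the sphere-intersection 𝒜₀,∞ into the ball 𝒜₀ = {x : |x−1|_p < |q|_p}. -/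
/-- the Potts–Bethe mapping sends the sphere-intersection
`𝒜₀,∞ = {x : ‖x-x⁽∞⁾‖ = ‖x-1‖ = ‖q‖}` (with `x⁽∞⁾ = 2-θ-q`) into the ball
`𝒜₀ = {x : ‖x-1‖ < ‖q‖}`: indeed `‖f(x)-1‖ ≤ ‖θ-1‖ < ‖q‖` there. -/
theorem potts_bethe_maps_A0inf_into_A0 (p : ℕ) [Fact (Nat.Prime p)]
    (hp5 : 5 ≤ p) (hp3 : p % 3 = 2) (θ : ℚ_[p]) (q : ℕ)
    (hθq : ‖θ - 1‖ < ‖(q : ℚ_[p])‖) (hq : ‖(q : ℚ_[p])‖ < 1)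
    (hne : (θ - 1) * (1 - θ - (q : ℚ_[p])) ≠ 0) :
    ∀ x : ℚ_[p], ‖x - (2 - θ - (q : ℚ_[p]))‖ = ‖(q : ℚ_[p])‖ → ‖x - 1‖ = ‖(q : ℚ_[p])‖ →
      ‖((θ * x + (q : ℚ_[p]) - 1) / (x + θ + (q : ℚ_[p]) - 2)) ^ 3 - 1‖ ≤ ‖θ - 1‖ ∧
      ‖θ - 1‖ < ‖(q : ℚ_[p])‖ := by
  intro x hxinf hx1
  refine ⟨?_, hθq⟩
  have hqpos : (0:ℝ) < ‖(q : ℚ_[p])‖ := lt_of_le_of_lt (norm_nonneg _) hθq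
  set d : ℚ_[p] := x + θ + (q : ℚ_[p]) - 2 with hd_def
  have hdnorm : ‖d‖ = ‖(q : ℚ_[p])‖ := by
    have : d = x - (2 - θ - (q : ℚ_[p])) := by ring
    rw [this, hxinf]
  have hd0 : d ≠ 0 := by
    intro h
    rw [h, norm_zero] at hdnorm
    exact hqpos.ne hdnorm
  set g : ℚ_[p] := (θ * x + (q : ℚ_[p]) - 1) / d with hg_def
  have hg1 : g - 1 = (θ - 1) * (x - 1) / d := by
    rw [hg_def, div_sub_one hd0]
    congr 1
    rw [hd_def]; ring
  have hg1norm : ‖g - 1‖ = ‖θ - 1‖ := by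
    rw [hg1, norm_div, norm_mul, hx1, hdnorm, mul_div_assoc,
      div_self hqpos.ne', mul_one]
  have hg1lt : ‖g - 1‖ < 1 := by
    rw [hg1norm]; exact hθq.trans hq
  have hgle : ‖g‖ ≤ 1 := by
    have : g = (g - 1) + 1 := by ring
    rw [this]
    calc ‖(g - 1) + 1‖ ≤ max ‖g - 1‖ ‖(1:ℚ_[p])‖ := Padic.nonarchimedean _ _
      _ ≤ 1 := by rw [norm_one]; exact max_le hg1lt.le le_rfl
  have hfac : g ^ 3 - 1 = (g - 1) * (g ^ 2 + g + 1) := by ring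
  have hsum : ‖g ^ 2 + g + 1‖ ≤ 1 := by
    calc ‖g ^ 2 + g + 1‖ ≤ max ‖g ^ 2 + g‖ ‖(1:ℚ_[p])‖ := Padic.nonarchimedean _ _
      _ ≤ 1 := by
          apply max_le _ (le_of_eq norm_one)
          calc ‖g ^ 2 + g‖ ≤ max ‖g ^ 2‖ ‖g‖ := Padic.nonarchimedean _ _
            _ ≤ 1 := by
                apply max_le _ hgle
                rw [norm_pow]
                exact pow_le_one₀ (norm_nonneg _) hgle
  calc ‖g ^ 3 - 1‖ = ‖g - 1‖ * ‖g ^ 2 + g + 1‖ := by rw [hfac, norm_mul]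
    _ ≤ ‖g - 1‖ * 1 := by
        exact mul_le_mul_of_nonneg_left hsum (norm_nonneg _)
    _ = ‖θ - 1‖ := by rw [mul_one, hg1norm]
end

section
/- Let p ≥ 5 be a prime with p ≡ 2 (mod 3). Let θ ∈ ℚ_p and q ∈ ℕ satisfy |θ−1|_p < |(q:ℚ_p)|_p < 1 and (θ−1)(1−θ−q) ≠ 0, and let f(x) = ((θx+q−1)/(x+θ+q−2))³ with x⁽∞⁾ = 2−θ−q. Then for every x ∈ ℚ_p with |θ−1|_p < |x − x⁽∞⁾|_p < |q|_p one has |f(x) − 1|_p = (|θ−1|_p / |x − x⁽∞⁾|_p) · |x − 1|_p < |q|_p; that is, f maps 𝒜₂ = {x : |θ−1|_p < |x − x⁽∞⁾|_p < |q|_p} into the ball 𝒜₀ = {x : |x−1|_p < |q|_p}. -/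
/-- the Potts–Bethe mapping sends
`𝒜₂ = {x : ‖θ-1‖ < ‖x-x⁽∞⁾‖ < ‖q‖}` (with `x⁽∞⁾ = 2-θ-q`) into the ball
`𝒜₀ = {x : ‖x-1‖ < ‖q‖}`, with
`‖f(x)-1‖ = (‖θ-1‖/‖x-x⁽∞⁾‖)·‖x-1‖ < ‖q‖`. -/
theorem potts_bethe_maps_A2_into_A0 (p : ℕ) [Fact (Nat.Prime p)]
    (hp5 : 5 ≤ p) (hp3 : p % 3 = 2) (θ : ℚ_[p]) (q : ℕ)
    (hθq : ‖θ - 1‖ < ‖(q : ℚ_[p])‖) (hq : ‖(q : ℚ_[p])‖ < 1)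
    (hne : (θ - 1) * (1 - θ - (q : ℚ_[p])) ≠ 0) :
    ∀ x : ℚ_[p], ‖θ - 1‖ < ‖x - (2 - θ - (q : ℚ_[p]))‖ →
      ‖x - (2 - θ - (q : ℚ_[p]))‖ < ‖(q : ℚ_[p])‖ →
      ‖((θ * x + (q : ℚ_[p]) - 1) / (x + θ + (q : ℚ_[p]) - 2)) ^ 3 - 1‖
        = ‖θ - 1‖ / ‖x - (2 - θ - (q : ℚ_[p]))‖ * ‖x - 1‖ ∧
      ‖((θ * x + (q : ℚ_[p]) - 1) / (x + θ + (q : ℚ_[p]) - 2)) ^ 3 - 1‖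
        < ‖(q : ℚ_[p])‖ := by
  intro x h1 h2
  have hθ1 : θ - 1 ≠ 0 := left_ne_zero_of_mul hne
  set D := x - (2 - θ - (q : ℚ_[p])) with hDdef
  have hD0 : D ≠ 0 := by
    intro h
    rw [h, norm_zero] at h1
    exact (norm_nonneg _).not_gt h1
  have hDpos : (0:ℝ) < ‖D‖ := norm_pos_iff.2 hD0
  have hqpos : (0:ℝ) < ‖(q : ℚ_[p])‖ := hDpos.trans h2
  -- ‖1 - θ - q‖ = ‖q‖
  have h1tq : ‖(1:ℚ_[p]) - θ - (q : ℚ_[p])‖ = ‖(q : ℚ_[p])‖ := by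
    have he : (1:ℚ_[p]) - θ - (q : ℚ_[p]) = -(θ - 1) + -((q : ℚ_[p])) := by ring
    have hne' : ‖-(θ - 1)‖ ≠ ‖-((q : ℚ_[p]))‖ := by
      rw [norm_neg, norm_neg]; exact ne_of_lt hθq
    rw [he, Padic.add_eq_max_of_ne hne', norm_neg, norm_neg,
      max_eq_right hθq.le]
  -- ‖x - 1‖ = ‖q‖
  have hx1 : ‖x - 1‖ = ‖(q : ℚ_[p])‖ := by
    have he : x - 1 = D + ((1:ℚ_[p]) - θ - (q : ℚ_[p])) := by rw [hDdef]; ring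
    have hne' : ‖D‖ ≠ ‖(1:ℚ_[p]) - θ - (q : ℚ_[p])‖ := by
      rw [h1tq]; exact ne_of_lt h2
    rw [he, Padic.add_eq_max_of_ne hne', h1tq, max_eq_right]
    rw [← h1tq] at h2 ⊢
    exact h2.le
  set u := (θ - 1) * (x - 1) / D with hu
  have hden : x + θ + (q : ℚ_[p]) - 2 = D := by rw [hDdef]; ring
  have hgu : (θ * x + (q : ℚ_[p]) - 1) / (x + θ + (q : ℚ_[p]) - 2) = 1 + u := by
    rw [hden, hu]
    field_simp
    ring
  have hunorm : ‖u‖ = ‖θ - 1‖ * ‖x - 1‖ / ‖D‖ := by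
    rw [hu, norm_div, norm_mul]
  have huq : ‖u‖ < ‖(q : ℚ_[p])‖ := by
    rw [hunorm, hx1, div_lt_iff₀ hDpos]
    calc ‖θ - 1‖ * ‖(q : ℚ_[p])‖ < ‖D‖ * ‖(q : ℚ_[p])‖ :=
          mul_lt_mul_of_pos_right h1 hqpos
      _ = ‖(q : ℚ_[p])‖ * ‖D‖ := mul_comm _ _
  have hu1 : ‖u‖ < 1 := huq.trans hq
  have h3 : ‖(3:ℚ_[p])‖ = 1 := by
    have hle : ‖((3:ℤ) : ℚ_[p])‖ ≤ 1 := Padic.norm_int_le_one _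
    have hnlt : ¬ ‖((3:ℤ) : ℚ_[p])‖ < 1 := by
      rw [Padic.norm_intCast_lt_one_iff]
      intro hdvd
      have := Int.le_of_dvd (by norm_num) hdvd
      omega
    have := le_antisymm hle (not_lt.1 hnlt)
    simpa using this
  have hfac : ‖u ^ 2 + 3 * u + 3‖ = 1 := by
    have hlt : ‖u ^ 2 + 3 * u‖ < 1 := by
      refine lt_of_le_of_lt (Padic.nonarchimedean _ _) ?_
      rw [max_lt_iff]
      constructor
      · rw [norm_pow]
        exact pow_lt_one₀ (norm_nonneg _) hu1 (by norm_num)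
      · rw [norm_mul, h3, one_mul]; exact hu1
    have hne' : ‖u ^ 2 + 3 * u‖ ≠ ‖(3:ℚ_[p])‖ := by rw [h3]; exact ne_of_lt hlt
    rw [Padic.add_eq_max_of_ne hne', h3, max_eq_right hlt.le]
  have hcube : ((θ * x + (q : ℚ_[p]) - 1) / (x + θ + (q : ℚ_[p]) - 2)) ^ 3 - 1
      = u * (u ^ 2 + 3 * u + 3) := by
    rw [hgu]; ring
  have hmain : ‖((θ * x + (q : ℚ_[p]) - 1) / (x + θ + (q : ℚ_[p]) - 2)) ^ 3 - 1‖
      = ‖θ - 1‖ / ‖D‖ * ‖x - 1‖ := by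
    rw [hcube, norm_mul, hfac, mul_one, hunorm]
    ring
  refine ⟨hmain, ?_⟩
  rw [hcube, norm_mul, hfac, mul_one]
  exact huq
end

section
/- Let p ≥ 5 be a prime with p ≡ 2 (mod 3). Let θ ∈ ℚ_p and q ∈ ℕ satisfy |θ−1|_p < |(q:ℚ_p)|_p < 1 and (θ−1)(1−θ−q) ≠ 0, and let f(x) = ((θx+q−1)/(x+θ+q−2))³ with x⁽∞⁾ = 2−θ−q. Then for every x ∈ ℚ_p with 0 < |x − x⁽∞⁾|_p < |q|_p·|θ−1|_p one has |f(x)|_p > 1, and hence |f(x) − 1|_p > |q|_p; that is, f maps 𝒜∞⁽¹⁾ = {x : 0 < |x − x⁽∞⁾|_p < |q|_p|θ−1|_p} into 𝒜₁ = {x : |x−1|_p > |q|_p}. -/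
/-- the Potts–Bethe mapping sends
`𝒜∞⁽¹⁾ = {x : 0 < ‖x-x⁽∞⁾‖ < ‖q‖·‖θ-1‖}` (with `x⁽∞⁾ = 2-θ-q`) into
`𝒜₁ = {x : ‖x-1‖ > ‖q‖}`: indeed `‖f(x)‖ > 1` and hence `‖f(x)-1‖ > ‖q‖`. -/
theorem potts_bethe_maps_Ainf1_into_A1 (p : ℕ) [Fact (Nat.Prime p)]
    (hp5 : 5 ≤ p) (hp3 : p % 3 = 2) (θ : ℚ_[p]) (q : ℕ)
    (hθq : ‖θ - 1‖ < ‖(q : ℚ_[p])‖) (hq : ‖(q : ℚ_[p])‖ < 1)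
    (hne : (θ - 1) * (1 - θ - (q : ℚ_[p])) ≠ 0) :
    ∀ x : ℚ_[p], 0 < ‖x - (2 - θ - (q : ℚ_[p]))‖ →
      ‖x - (2 - θ - (q : ℚ_[p]))‖ < ‖(q : ℚ_[p])‖ * ‖θ - 1‖ →
      1 < ‖((θ * x + (q : ℚ_[p]) - 1) / (x + θ + (q : ℚ_[p]) - 2)) ^ 3‖ ∧
      ‖(q : ℚ_[p])‖ < ‖((θ * x + (q : ℚ_[p]) - 1) / (x + θ + (q : ℚ_[p]) - 2)) ^ 3 - 1‖ := by
  intro x h0 h1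
  set d := x - (2 - θ - (q : ℚ_[p])) with hd
  have hθ1 : ‖θ - 1‖ < 1 := lt_trans hθq hq
  have hθ : ‖θ‖ = 1 := by
    have h : θ = (θ - 1) + 1 := by ring
    rw [h, Padic.add_eq_max_of_ne (by rw [norm_one]; exact ne_of_lt hθ1)]
    simp [le_of_lt hθ1]
  have h1θq : ‖1 - θ - (q : ℚ_[p])‖ = ‖(q : ℚ_[p])‖ := by
    have h : (1 : ℚ_[p]) - θ - q = -((θ - 1) + q) := by ring
    rw [h, norm_neg, Padic.add_eq_max_of_ne (ne_of_lt hθq)]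
    exact max_eq_right (le_of_lt hθq)
  have hNval : ‖(θ - 1) * (1 - θ - (q : ℚ_[p]))‖ = ‖θ - 1‖ * ‖(q : ℚ_[p])‖ := by
    rw [norm_mul, h1θq]
  have hdlt : ‖d‖ < ‖θ - 1‖ * ‖(q : ℚ_[p])‖ := by
    rw [mul_comm]; exact h1
  have hN : ‖θ * d + (θ - 1) * (1 - θ - (q : ℚ_[p]))‖ = ‖θ - 1‖ * ‖(q : ℚ_[p])‖ := by
    rw [Padic.add_eq_max_of_ne, hNval, norm_mul, hθ, one_mul]
    · exact max_eq_right (le_of_lt hdlt)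
    · rw [norm_mul, hθ, one_mul, hNval]; exact ne_of_lt hdlt
  have hnum : θ * x + (q : ℚ_[p]) - 1 = θ * d + (θ - 1) * (1 - θ - (q : ℚ_[p])) := by
    rw [hd]; ring
  have hden : x + θ + (q : ℚ_[p]) - 2 = d := by rw [hd]; ring
  have hfrac : 1 < ‖(θ * x + (q : ℚ_[p]) - 1) / (x + θ + (q : ℚ_[p]) - 2)‖ := by
    rw [hnum, hden, norm_div, hN]
    exact (one_lt_div h0).mpr hdlt
  have hpow : 1 < ‖((θ * x + (q : ℚ_[p]) - 1) / (x + θ + (q : ℚ_[p]) - 2)) ^ 3‖ := by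
    rw [norm_pow]
    exact one_lt_pow₀ hfrac (by norm_num)
  refine ⟨hpow, ?_⟩
  have hsub : ‖((θ * x + (q : ℚ_[p]) - 1) / (x + θ + (q : ℚ_[p]) - 2)) ^ 3 - 1‖
      = ‖((θ * x + (q : ℚ_[p]) - 1) / (x + θ + (q : ℚ_[p]) - 2)) ^ 3‖ := by
    rw [sub_eq_add_neg, Padic.add_eq_max_of_ne (by rw [norm_neg, norm_one]; exact (ne_of_lt hpow).symm)]
    rw [norm_neg, norm_one]
    exact max_eq_left (le_of_lt hpow)
  rw [hsub]
  exact lt_trans hq hpow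
end

section
/- Let p ≥ 5 be a prime with p ≡ 2 (mod 3). Let θ ∈ ℚ_p and q ∈ ℕ satisfy |θ−1|_p < |(q:ℚ_p)|_p < 1 and (θ−1)(1−θ−q) ≠ 0, and let f(x) = ((θx+q−1)/(x+θ+q−2))³ with x⁽∞⁾ = 2−θ−q. Then for every x ∈ ℚ_p with |q|_p·|θ−1|_p < |x − x⁽∞⁾|_p < |θ−1|_p one has |q|_p < |f(x) − 1|_p = (|θ−1|_p / |x − x⁽∞⁾|_p)·|x − 1|_p < 1; that is, f maps 𝒜∞⁽³⁾ = {x : |q|_p|θ−1|_p < |x − x⁽∞⁾|_p < |θ−1|_p} into 𝒜₁ = {x : |x−1|_p > |q|_p}. -/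
/-- the Potts–Bethe mapping sends
`𝒜∞⁽³⁾ = {x : ‖q‖·‖θ-1‖ < ‖x-x⁽∞⁾‖ < ‖θ-1‖}` (with `x⁽∞⁾ = 2-θ-q`) into
`𝒜₁ = {x : ‖x-1‖ > ‖q‖}`, with
`‖q‖ < ‖f(x)-1‖ = (‖θ-1‖/‖x-x⁽∞⁾‖)·‖x-1‖ < 1`. -/
theorem potts_bethe_maps_Ainf3_into_A1 (p : ℕ) [Fact (Nat.Prime p)]
    (hp5 : 5 ≤ p) (hp3 : p % 3 = 2) (θ : ℚ_[p]) (q : ℕ)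
    (hθq : ‖θ - 1‖ < ‖(q : ℚ_[p])‖) (hq : ‖(q : ℚ_[p])‖ < 1)
    (hne : (θ - 1) * (1 - θ - (q : ℚ_[p])) ≠ 0) :
    ∀ x : ℚ_[p], ‖(q : ℚ_[p])‖ * ‖θ - 1‖ < ‖x - (2 - θ - (q : ℚ_[p]))‖ →
      ‖x - (2 - θ - (q : ℚ_[p]))‖ < ‖θ - 1‖ →
      ‖(q : ℚ_[p])‖ < ‖((θ * x + (q : ℚ_[p]) - 1) / (x + θ + (q : ℚ_[p]) - 2)) ^ 3 - 1‖ ∧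
      ‖((θ * x + (q : ℚ_[p]) - 1) / (x + θ + (q : ℚ_[p]) - 2)) ^ 3 - 1‖
        = ‖θ - 1‖ / ‖x - (2 - θ - (q : ℚ_[p]))‖ * ‖x - 1‖ ∧
      ‖((θ * x + (q : ℚ_[p]) - 1) / (x + θ + (q : ℚ_[p]) - 2)) ^ 3 - 1‖ < 1 := by
  intro x h1 h2
  set Q : ℚ_[p] := (q : ℚ_[p]) with hQdef
  have ht0 : θ - 1 ≠ 0 := fun h => hne (by rw [h, zero_mul])
  have htpos : (0:ℝ) < ‖θ - 1‖ := norm_pos_iff.mpr ht0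
  have hQpos : (0:ℝ) < ‖Q‖ := lt_trans htpos hθq
  have hdpos : (0:ℝ) < ‖x - (2 - θ - Q)‖ := lt_trans (mul_pos hQpos htpos) h1
  have hd0 : x - (2 - θ - Q) ≠ 0 := norm_pos_iff.mp hdpos
  have hden : x + θ + Q - 2 = x - (2 - θ - Q) := by ring
  -- ‖x - 1‖ = ‖Q‖
  have hx1 : ‖x - 1‖ = ‖Q‖ := by
    have hsmall : ‖x - (2 - θ - Q) - (θ - 1)‖ < ‖Q‖ := by
      have h' : ‖x - (2 - θ - Q) + -(θ - 1)‖ ≤ max ‖x - (2 - θ - Q)‖ ‖-(θ - 1)‖ :=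
        Padic.nonarchimedean _ _
      rw [norm_neg] at h'
      exact lt_of_le_of_lt (by rw [sub_eq_add_neg]; exact h')
        (max_lt (lt_trans h2 hθq) hθq)
    have hne' : ‖x - (2 - θ - Q) - (θ - 1)‖ ≠ ‖-Q‖ := by
      rw [norm_neg]; exact ne_of_lt hsmall
    have : x - 1 = (x - (2 - θ - Q) - (θ - 1)) + (-Q) := by ring
    rw [this, Padic.add_eq_max_of_ne hne', norm_neg,
      max_eq_right (le_of_lt hsmall)]
  -- z - 1
  set z : ℚ_[p] := (θ * x + Q - 1) / (x + θ + Q - 2) with hzdef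
  have hz1 : z - 1 = (θ - 1) * (x - 1) / (x - (2 - θ - Q)) := by
    rw [hzdef, hden]
    field_simp
    ring
  have hnz1 : ‖z - 1‖ = ‖θ - 1‖ / ‖x - (2 - θ - Q)‖ * ‖x - 1‖ := by
    rw [hz1, norm_div, norm_mul]; ring
  have hwlt1 : ‖z - 1‖ < 1 := by
    rw [hnz1, hx1, div_mul_eq_mul_div, div_lt_one hdpos, mul_comm]
    exact h1
  have hwgtQ : ‖Q‖ < ‖z - 1‖ := by
    rw [hnz1, hx1, div_mul_eq_mul_div, lt_div_iff₀ hdpos]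
    calc ‖Q‖ * ‖x - (2 - θ - Q)‖ < ‖Q‖ * ‖θ - 1‖ := by
          exact mul_lt_mul_of_pos_left h2 hQpos
      _ = ‖θ - 1‖ * ‖Q‖ := mul_comm _ _
  -- ‖3‖ = 1
  have h3 : ‖(3 : ℚ_[p])‖ = 1 := by
    have hle : ‖((3:ℤ) : ℚ_[p])‖ ≤ 1 := Padic.norm_int_le_one 3
    have : ¬ ((p:ℤ) ∣ 3) := by
      intro h
      have := Int.le_of_dvd (by norm_num) h
      omega
    have hnlt : ¬ ‖((3:ℤ) : ℚ_[p])‖ < 1 := by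
      rw [Padic.norm_intCast_lt_one_iff]; exact this
    push_cast at hle hnlt
    linarith [lt_or_eq_of_le hle]
  -- the cofactor has norm 1
  have hcof : ‖(z - 1)^2 + 3*(z - 1) + 3‖ = 1 := by
    have hsq : ‖(z - 1)^2 + 3*(z - 1)‖ < 1 := by
      have h' : ‖(z - 1)^2 + 3*(z - 1)‖ ≤ max ‖(z - 1)^2‖ ‖3*(z - 1)‖ :=
        Padic.nonarchimedean _ _
      refine lt_of_le_of_lt h' (max_lt ?_ ?_)
      · rw [norm_pow]
        calc ‖z - 1‖ ^ 2 ≤ ‖z - 1‖ := by nlinarith [norm_nonneg (z - 1)]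
          _ < 1 := hwlt1
      · rw [norm_mul, h3, one_mul]; exact hwlt1
    have hne' : ‖(z - 1)^2 + 3*(z - 1)‖ ≠ ‖(3:ℚ_[p])‖ := by
      rw [h3]; exact ne_of_lt hsq
    rw [Padic.add_eq_max_of_ne hne', h3, max_eq_right (le_of_lt (h3 ▸ hsq))]
  have hfactor : z ^ 3 - 1 = (z - 1) * ((z - 1)^2 + 3*(z - 1) + 3) := by ring
  have hnorm : ‖z ^ 3 - 1‖ = ‖z - 1‖ := by
    rw [hfactor, norm_mul, hcof, mul_one]
  refine ⟨?_, ?_, ?_⟩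
  · rw [hnorm]; exact hwgtQ
  · rw [hnorm]; exact hnz1
  · rw [hnorm]; exact hwlt1
end

section
/- Let p ≥ 5 be a prime with p ≡ 2 (mod 3), and let θ ∈ ℚ_p with |θ−1|_p < 1. Then for all u, v ∈ ℚ_p with |u|_p = |v|_p = 1 one has |(θ²+θ+1)u² + (2θ+1)uv + v²|_p = 1. -/
/-!
Writing `w = v + θu`, the form equals `w² + wu + u²`, and `w` is integral because `|θ|_p ≤ 1`.
Modulo `p` a zero of `x² + xy + y²` with `y ≠ 0` gives a root `t = x/y` of `t² + t + 1`, hence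
`t³ = 1` with `t ≠ 1`; this is impossible in a finite field of order `q ≡ 2 (mod 3)`, where
`gcd(3, q - 1) = 1`. So `w² + wu + u²` reduces to a nonzero residue and is a `p`-adic unit.
-/

theorem FiniteField.sq_add_self_add_one_ne_zero {K : Type*} [Field K] [Fintype K]
    (hK : Fintype.card K % 3 = 2) (x : K) : x ^ 2 + x + 1 ≠ 0 := by
  intro hx
  have hx0 : x ≠ 0 := by rintro rfl; simp at hx
  have hcube : x ^ 3 = 1 := by linear_combination (x - 1) * hx
  have hcoprime : Nat.Coprime 3 (Fintype.card K - 1) :=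
    (Nat.Prime.coprime_iff_not_dvd Nat.prime_three).mpr (by omega)
  have hx1 : x = 1 := by
    simpa [hcoprime] using pow_gcd_eq_one.mpr ⟨hcube, FiniteField.pow_card_sub_one_eq_one x hx0⟩
  have h3 : ((3 : ℕ) : K) = 0 := by
    rw [hx1] at hx
    norm_num at hx
    exact_mod_cast hx
  have : Fact (Nat.Prime 3) := ⟨Nat.prime_three⟩
  have h3char : 3 ∣ ringChar K :=
    not_not.mp fun h ↦ not_isUnit_zero (h3 ▸ (isUnit_iff_not_dvd_char K 3).mpr h)
  have h3card : 3 ∣ Fintype.card K := (prime_dvd_char_iff_dvd_card 3).mp h3char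
  omega

theorem FiniteField.sq_add_mul_add_sq_ne_zero {K : Type*} [Field K] [Fintype K]
    (hK : Fintype.card K % 3 = 2) (x : K) {y : K} (hy : y ≠ 0) : x ^ 2 + x * y + y ^ 2 ≠ 0 := by
  convert mul_ne_zero (sq_add_self_add_one_ne_zero hK (x / y)) (pow_ne_zero 2 hy) using 1
  field_simp

theorem PadicInt.toZMod_ne_zero_iff_isUnit {p : ℕ} [Fact p.Prime] (z : ℤ_[p]) :
    toZMod z ≠ 0 ↔ IsUnit z := by
  rw [ne_eq, ← RingHom.mem_ker, ker_toZMod, IsLocalRing.mem_maximalIdeal, mem_nonunits_iff,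
    not_not]

theorem PadicInt.norm_sq_add_mul_add_sq {p : ℕ} [Fact p.Prime] (hp : p % 3 = 2) (x : ℤ_[p])
    {y : ℤ_[p]} (hy : ‖y‖ = 1) : ‖x ^ 2 + x * y + y ^ 2‖ = 1 := by
  have hcard : Fintype.card (ZMod p) % 3 = 2 := by rwa [ZMod.card]
  have hy' : toZMod y ≠ 0 := (toZMod_ne_zero_iff_isUnit y).mpr (isUnit_iff.mpr hy)
  rw [← isUnit_iff, ← toZMod_ne_zero_iff_isUnit]
  simpa only [map_add, map_mul, map_pow] using
    FiniteField.sq_add_mul_add_sq_ne_zero hcard (toZMod x) hy'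

theorem Padic.norm_sq_add_mul_add_sq {p : ℕ} [Fact p.Prime] (hp : p % 3 = 2) {x y : ℚ_[p]}
    (hx : ‖x‖ ≤ 1) (hy : ‖y‖ = 1) : ‖x ^ 2 + x * y + y ^ 2‖ = 1 :=
  PadicInt.norm_sq_add_mul_add_sq (x := ⟨x, hx⟩) (y := ⟨y, hy.le⟩) hp hy

theorem potts_bethe_quadratic_form_unit_general (p : ℕ) [Fact (Nat.Prime p)]
    (hp3 : p % 3 = 2) (θ : ℚ_[p]) (hθ : ‖θ - 1‖ < 1) :
    ∀ u v : ℚ_[p], ‖u‖ = 1 → ‖v‖ = 1 →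
      ‖(θ ^ 2 + θ + 1) * u ^ 2 + (2 * θ + 1) * u * v + v ^ 2‖ = 1 := by
  intro u v hu hv
  have hθ_le : ‖θ‖ ≤ 1 := by
    simpa using (IsUltrametricDist.norm_add_le_max (θ - 1) 1).trans (max_le hθ.le norm_one.le)
  have hw : ‖v + θ * u‖ ≤ 1 :=
    (IsUltrametricDist.norm_add_le_max _ _).trans (max_le hv.le (by rwa [norm_mul, hu, mul_one]))
  calc ‖(θ ^ 2 + θ + 1) * u ^ 2 + (2 * θ + 1) * u * v + v ^ 2‖
      = ‖(v + θ * u) ^ 2 + (v + θ * u) * u + u ^ 2‖ := by ring_nf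
    _ = 1 := Padic.norm_sq_add_mul_add_sq hp3 hw hu

/-- the key quadratic-form estimate: for `p ≡ 2 (mod 3)`, `p ≥ 5`,
`‖θ-1‖ < 1`, and any units `u, v` one has
`‖(θ²+θ+1)u² + (2θ+1)uv + v²‖ = 1`. -/
theorem potts_bethe_quadratic_form_unit (p : ℕ) [Fact (Nat.Prime p)]
    (hp5 : 5 ≤ p) (hp3 : p % 3 = 2) (θ : ℚ_[p]) (hθ : ‖θ - 1‖ < 1) :
    ∀ u v : ℚ_[p], ‖u‖ = 1 → ‖v‖ = 1 →
      ‖(θ ^ 2 + θ + 1) * u ^ 2 + (2 * θ + 1) * u * v + v ^ 2‖ = 1 :=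
  potts_bethe_quadratic_form_unit_general p hp3 θ hθ
end
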